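/- arXiv:2111.12035 — 6 statements merged into one kernel-verified Lean document; each statement's English description precedes it below -/
import Mathlib

section
/- Let D ⊆ ℝ^d be an open set and U : Ω × D → ℝ a jointly measurable second-order stochastic process on a probability space (Ω, 𝒜, ℙ), i.e. ω ↦ U(ω,x) is square-integrable for every x ∈ D. Let m(x) = E[U(·,x)] be its mean function, k(x,x') = E[(U(·,x) − m(x))(U(·,x') − m(x'))] its covariance function, and σ(x) = √(k(x,x)) its standard-deviation function. If m and σ are locally integrable on D, then (a) for ℙ-almost every ω the trajectory x ↦ U(ω,x) is locally integrable on D, and (b) for every x ∈ D the function y ↦ k(x,y) is locally integrable on D. -/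
open MeasureTheory

/-- For a jointly measurable second-order stochastic process `U` on an open set
`D ⊆ ℝ^d`, if the mean `m` and standard deviation `σ` are locally integrable on `D`, then
(a) almost every trajectory is locally integrable on `D`, and
(b) for every `x ∈ D`, `y ↦ k x y` is locally integrable on `D`. -/
theorem stmt_0 {d : ℕ} {Ω : Type*} [MeasurableSpace Ω] (P : Measure Ω) [IsProbabilityMeasure P]
    (D : Set (Fin d → ℝ)) (hD : IsOpen D)
    (U : Ω → (Fin d → ℝ) → ℝ)
    (hU_meas : Measurable (Function.uncurry U))
    (hU_L2 : ∀ x ∈ D, MemLp (fun ω => U ω x) 2 P)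
    (m : (Fin d → ℝ) → ℝ) (hm : ∀ x ∈ D, m x = ∫ ω, U ω x ∂P)
    (k : (Fin d → ℝ) → (Fin d → ℝ) → ℝ)
    (hk : ∀ x ∈ D, ∀ y ∈ D, k x y = ∫ ω, (U ω x - m x) * (U ω y - m y) ∂P)
    (σ : (Fin d → ℝ) → ℝ) (hσ : ∀ x ∈ D, σ x = Real.sqrt (k x x))
    (hm_loc : ∀ K ⊆ D, IsCompact K → IntegrableOn m K volume)
    (hσ_loc : ∀ K ⊆ D, IsCompact K → IntegrableOn σ K volume) :
    (∀ᵐ ω ∂P, ∀ K ⊆ D, IsCompact K → IntegrableOn (fun x => U ω x) K volume) ∧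
    (∀ x ∈ D, ∀ K ⊆ D, IsCompact K → IntegrableOn (fun y => k x y) K volume) := by
  -- centered process
  have hmem : ∀ x, x ∈ D → MemLp (fun ω => U ω x - m x) 2 P := fun x hx =>
    (hU_L2 x hx).sub (memLp_const (m x))
  -- covariance as L² inner product
  have hAB : ∀ x (hx : x ∈ D) y (hy : y ∈ D),
      k x y = (inner ℝ (MemLp.toLp _ (hmem x hx)) (MemLp.toLp _ (hmem y hy)) : ℝ) := by
    intro x hx y hy
    rw [hk x hx y hy, L2.inner_def]
    refine integral_congr_ae ?_
    filter_upwards [MemLp.coeFn_toLp (hmem x hx), MemLp.coeFn_toLp (hmem y hy)] with ω h1 h2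
    simp only [h1, h2, RCLike.inner_apply, conj_trivial, mul_comm]
  -- standard deviation as L² norm
  have hB : ∀ x (hx : x ∈ D), σ x = ‖MemLp.toLp _ (hmem x hx)‖ := by
    intro x hx
    rw [hσ x hx, hAB x hx x hx, real_inner_self_eq_norm_sq, Real.sqrt_sq (norm_nonneg _)]
  -- Lemma C : E |U(·,x)| ≤ |m x| + σ x
  have hC : ∀ x, x ∈ D → ∫ ω, ‖U ω x‖ ∂P ≤ |m x| + σ x := by
    intro x hx
    have hfint : Integrable (fun ω => U ω x - m x) P := (hmem x hx).integrable one_le_two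
    have hUint : Integrable (fun ω => U ω x) P := (hU_L2 x hx).integrable one_le_two
    have h1 : ∫ ω, ‖U ω x‖ ∂P ≤ ∫ ω, (‖U ω x - m x‖ + ‖m x‖) ∂P := by
      refine integral_mono hUint.norm (hfint.norm.add (integrable_const _)) fun ω => ?_
      calc ‖U ω x‖ = ‖(U ω x - m x) + m x‖ := by ring_nf
        _ ≤ ‖U ω x - m x‖ + ‖m x‖ := norm_add_le _ _
    have h2 : ∫ ω, (‖U ω x - m x‖ + ‖m x‖) ∂P
        = (∫ ω, ‖U ω x - m x‖ ∂P) + ‖m x‖ := by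
      rw [integral_add hfint.norm (integrable_const _), integral_const]; simp
    -- Cauchy–Schwarz with the constant 1
    have h3 : ∫ ω, ‖U ω x - m x‖ ∂P ≤ σ x := by
      set a := MemLp.toLp _ ((hmem x hx).norm)
      set b := MemLp.toLp _ (memLp_const (μ := P) (p := 2) (1 : ℝ))
      have hab : ∫ ω, ‖U ω x - m x‖ ∂P = (inner ℝ a b : ℝ) := by
        rw [L2.inner_def]
        refine (integral_congr_ae ?_).symm
        filter_upwards [MemLp.coeFn_toLp ((hmem x hx).norm),
          MemLp.coeFn_toLp (memLp_const (μ := P) (p := 2) (1 : ℝ))] with ω h1 h2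
        simp only [a, b, h1, h2, RCLike.inner_apply, conj_trivial, mul_one, one_mul]
      have hna : ‖a‖ = σ x := by
        rw [hB x hx, Lp.norm_toLp, Lp.norm_toLp, eLpNorm_norm]
      have hnb : ‖b‖ = 1 := by
        rw [Lp.norm_toLp, eLpNorm_const (1:ℝ) two_ne_zero (IsProbabilityMeasure.ne_zero P)]
        simp
      calc ∫ ω, ‖U ω x - m x‖ ∂P = (inner ℝ a b : ℝ) := hab
        _ ≤ ‖a‖ * ‖b‖ := real_inner_le_norm a b
        _ = σ x := by rw [hna, hnb, mul_one]
    calc ∫ ω, ‖U ω x‖ ∂P ≤ (∫ ω, ‖U ω x - m x‖ ∂P) + ‖m x‖ := h1.trans (le_of_eq h2)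
      _ ≤ σ x + ‖m x‖ := by linarith
      _ = |m x| + σ x := by rw [Real.norm_eq_abs]; ring
  -- compact exhaustion of D
  set W : ℕ → Set (Fin d → ℝ) :=
    fun n => Metric.closedBall 0 n ∩ {x | (n : ENNReal)⁻¹ ≤ EMetric.infEdist x Dᶜ} with hW
  have hWc : ∀ n, IsCompact (W n) := fun n =>
    (isCompact_closedBall _ _).inter_right
      (isClosed_le continuous_const EMetric.continuous_infEdist)
  have hWD : ∀ n, W n ⊆ D := by
    intro n x hx
    by_contra hxD
    have h0 : EMetric.infEdist x Dᶜ = 0 :=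
      EMetric.mem_closure_iff_infEdist_zero.1 (subset_closure hxD)
    have hpos : (0 : ENNReal) < (n : ENNReal)⁻¹ :=
      ENNReal.inv_pos.2 (ENNReal.natCast_ne_top n)
    have := hx.2
    rw [Set.mem_setOf_eq, h0] at this
    exact absurd (lt_of_lt_of_le hpos this) (lt_irrefl _)
  have hWmain : ∀ K, K ⊆ D → IsCompact K → ∃ n, K ⊆ W n := by
    intro K hKD hK
    rcases K.eq_empty_or_nonempty with rfl | hne
    · exact ⟨0, Set.empty_subset _⟩
    obtain ⟨z, hzK, hzmin⟩ := hK.exists_isMinOn hne EMetric.continuous_infEdist.continuousOn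
    have hz0 : EMetric.infEdist z Dᶜ ≠ 0 := by
      intro h0
      have : z ∈ closure Dᶜ := EMetric.mem_closure_iff_infEdist_zero.2 h0
      rw [hD.isClosed_compl.closure_eq] at this
      exact this (hKD hzK)
    obtain ⟨n₁, hn₁⟩ := ENNReal.exists_inv_nat_lt hz0
    obtain ⟨R, hR⟩ := hK.isBounded.subset_closedBall 0
    obtain ⟨n₂, hn₂⟩ := exists_nat_ge R
    refine ⟨max n₁ n₂, fun x hx => ⟨?_, ?_⟩⟩
    · refine Metric.closedBall_subset_closedBall ?_ (hR hx)
      calc R ≤ (n₂ : ℝ) := hn₂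
        _ ≤ ((max n₁ n₂ : ℕ) : ℝ) := by exact_mod_cast le_max_right n₁ n₂
    · have h1 : ((max n₁ n₂ : ℕ) : ENNReal)⁻¹ ≤ (n₁ : ENNReal)⁻¹ := by
        apply ENNReal.inv_le_inv.2
        exact_mod_cast le_max_left n₁ n₂
      exact h1.trans (hn₁.le.trans (hzmin hx))
  -- main estimate per compact
  have key : ∀ K, K ⊆ D → IsCompact K →
      ∀ᵐ ω ∂P, IntegrableOn (fun x => U ω x) K volume := by
    intro K hKD hK
    have hKm : MeasurableSet K := hK.isClosed.measurableSet
    have hG : AEStronglyMeasurable (fun p : ((Fin d → ℝ) × Ω) => U p.2 p.1)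
        ((volume.restrict K).prod P) :=
      (hU_meas.comp measurable_swap).aestronglyMeasurable
    have hInt : Integrable (fun p : ((Fin d → ℝ) × Ω) => U p.2 p.1)
        ((volume.restrict K).prod P) := by
      rw [integrable_prod_iff hG]
      constructor
      · refine (ae_restrict_iff' hKm).2 (ae_of_all _ fun y hy => ?_)
        exact (hU_L2 y (hKD hy)).integrable one_le_two
      · refine Integrable.mono' ((hm_loc K hKD hK).abs.add (hσ_loc K hKD hK))
          hG.norm.integral_prod_right' ?_
        refine (ae_restrict_iff' hKm).2 (ae_of_all _ fun y hy => ?_)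
        rw [Real.norm_eq_abs, abs_of_nonneg (integral_nonneg fun ω => norm_nonneg _)]
        exact hC y (hKD hy)
    exact hInt.prod_left_ae
  constructor
  · have hall : ∀ᵐ ω ∂P, ∀ n, IntegrableOn (fun x => U ω x) (W n) volume :=
      ae_all_iff.2 fun n => key (W n) (hWD n) (hWc n)
    filter_upwards [hall] with ω hω K hKD hK
    obtain ⟨n, hn⟩ := hWmain K hKD hK
    exact (hω n).mono_set hn
  · intro x hx K hKD hK
    have hKm : MeasurableSet K := hK.isClosed.measurableSet
    have hF : AEStronglyMeasurable
        (fun p : ((Fin d → ℝ) × Ω) => (U p.2 x - m x) * (U p.2 p.1 - m p.1))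
        ((volume.restrict K).prod P) := by
      refine AEStronglyMeasurable.mul ?_ ?_
      · exact ((hU_meas.comp (measurable_snd.prodMk measurable_const)).sub
          measurable_const).aestronglyMeasurable
      · exact ((hU_meas.comp measurable_swap).aestronglyMeasurable).sub
          ((hm_loc K hKD hK).aestronglyMeasurable.comp_fst)
    have hmeas : AEStronglyMeasurable
        (fun y => ∫ ω, (U ω x - m x) * (U ω y - m y) ∂P) (volume.restrict K) :=
      hF.integral_prod_right'
    have hcongr : (fun y => ∫ ω, (U ω x - m x) * (U ω y - m y) ∂P)
        =ᵐ[volume.restrict K] (fun y => k x y) :=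
      (ae_restrict_iff' hKm).2 (ae_of_all _ fun y hy => (hk x hx y (hKD hy)).symm)
    refine Integrable.mono' ((hσ_loc K hKD hK).const_mul (σ x)) (hmeas.congr hcongr) ?_
    refine (ae_restrict_iff' hKm).2 (ae_of_all _ fun y hy => ?_)
    rw [Real.norm_eq_abs, hAB x hx y (hKD hy), hB x hx, hB y (hKD hy)]
    exact abs_real_inner_le_norm _ _
end

section
/- Let D ⊆ ℝ^d be open, U : Ω × D → ℝ a jointly measurable second-order stochastic process with mean m, covariance k, and standard deviation σ, where m and σ are locally integrable on D. Let n be a nonnegative integer and, for each multi-index α ∈ ℕ^d with |α| ≤ n, let a_α : D → ℝ be of class C^{|α|}; define the formal adjoint on test functions φ ∈ C_c^∞(D) by T*φ = Σ_{|α|≤n} (−1)^{|α|} ∂^α(a_α φ). Assume ∫_D m(x) T*φ(x) dx = 0 for all φ ∈ C_c^∞(D). If there exists an event A with ℙ(A) = 1 such that for every ω ∈ A and every φ ∈ C_c^∞(D) one has ∫_D U(ω,x) T*φ(x) dx = 0, then for every x ∈ D and every φ ∈ C_c^∞(D) one has ∫_D k(x,y) T*φ(y) dy = 0. -/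
open MeasureTheory
open scoped ENNReal

/-- The partial derivative `∂_i f` of a scalar function on `ℝ^d`. -/
noncomputable def pderiv' {d : ℕ} (i : Fin d) (f : (Fin d → ℝ) → ℝ) : (Fin d → ℝ) → ℝ :=
  fun x => fderiv ℝ f x (Pi.single i 1)

/-- The multi-index partial derivative `∂^α f = ∂_1^{α 1} ⋯ ∂_d^{α d} f`. -/
noncomputable def multiDeriv {d : ℕ} (α : Fin d → ℕ) (f : (Fin d → ℝ) → ℝ) :
    (Fin d → ℝ) → ℝ :=
  (List.finRange d).foldr (fun i g => (pderiv' i)^[α i] g) f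

/-- The finite set of multi-indices `α ∈ ℕ^d` with `|α| = Σ α i ≤ n`. -/
def multiIdx (d n : ℕ) : Finset (Fin d → ℕ) :=
  (Fintype.piFinset fun _ : Fin d => Finset.range (n + 1)).filter fun α => ∑ i, α i ≤ n

/-- The formal adjoint `T*φ = Σ_{|α| ≤ n} (−1)^{|α|} ∂^α (a_α φ)` of the linear differential
operator `T = Σ_{|α| ≤ n} a_α ∂^α`, applied to a test function `φ`. -/
noncomputable def Tstar {d : ℕ} (n : ℕ) (a : (Fin d → ℕ) → (Fin d → ℝ) → ℝ)
    (φ : (Fin d → ℝ) → ℝ) : (Fin d → ℝ) → ℝ :=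
  fun x => ∑ α ∈ multiIdx d n, (-1 : ℝ) ^ (∑ i, α i) * multiDeriv α (fun y => a α y * φ y) x

/-- `φ` is a test function on `D`: infinitely differentiable with compact support in `D`. -/
def IsTestFun {d : ℕ} (D : Set (Fin d → ℝ)) (φ : (Fin d → ℝ) → ℝ) : Prop :=
  ContDiff ℝ (⊤ : ℕ∞) φ ∧ HasCompactSupport φ ∧ tsupport φ ⊆ D

lemma pderiv'_contDiffOn {d : ℕ} {D : Set (Fin d → ℝ)} (hD : IsOpen D) {f} {i : Fin d} {m : ℕ}
    (hf : ContDiffOn ℝ ((m+1 : ℕ) : ℕ∞) f D) : ContDiffOn ℝ (m : ℕ∞) (pderiv' i f) D := by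
  have h := hf.fderiv_of_isOpen hD (by push_cast; rfl)
  exact h.clm_apply contDiffOn_const

lemma pderiv'_iter_contDiffOn {d : ℕ} {D : Set (Fin d → ℝ)} (hD : IsOpen D) {i : Fin d}
    (j : ℕ) (m : ℕ) : ∀ f, ContDiffOn ℝ ((j + m : ℕ) : ℕ∞) f D →
    ContDiffOn ℝ ((m : ℕ) : ℕ∞) ((pderiv' i)^[j] f) D := by
  induction j generalizing m with
  | zero => intro f hf; simpa using hf
  | succ j ih =>
    intro f hf
    rw [Function.iterate_succ_apply']
    have h1 : ((j + (m+1) : ℕ) : ℕ∞) = ((j + 1 + m : ℕ) : ℕ∞) := by norm_cast; omega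
    exact pderiv'_contDiffOn hD (ih (m+1) f (h1 ▸ hf))

lemma foldr_contDiffOn {d : ℕ} {D : Set (Fin d → ℝ)} (hD : IsOpen D) (α : Fin d → ℕ)
    (l : List (Fin d)) (m : ℕ) : ∀ f, ContDiffOn ℝ (((l.map α).sum + m : ℕ) : ℕ∞) f D →
    ContDiffOn ℝ ((m : ℕ) : ℕ∞) (l.foldr (fun i g => (pderiv' i)^[α i] g) f) D := by
  induction l generalizing m with
  | nil => intro f hf; simpa using hf
  | cons i l ih =>
    intro f hf
    simp only [List.foldr_cons]
    have h1 : (((l.map α).sum + (α i + m) : ℕ) : ℕ∞) = ((((i :: l).map α).sum + m : ℕ) : ℕ∞) := by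
      norm_cast; simp; omega
    exact pderiv'_iter_contDiffOn hD (α i) m _ (ih (α i + m) f (h1 ▸ hf))

lemma multiDeriv_continuousOn {d : ℕ} {D : Set (Fin d → ℝ)} (hD : IsOpen D) {α : Fin d → ℕ} {f}
    (hf : ContDiffOn ℝ ((∑ i, α i : ℕ) : ℕ∞) f D) : ContinuousOn (multiDeriv α f) D := by
  have h1 : ((((List.finRange d).map α).sum + 0 : ℕ) : ℕ∞) = ((∑ i, α i : ℕ) : ℕ∞) := by
    rw [Fin.sum_univ_def]; norm_num
  have := foldr_contDiffOn hD α (List.finRange d) 0 f (h1 ▸ hf)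
  exact this.continuousOn

lemma pderiv'_eq_zero_on {d : ℕ} {V : Set (Fin d → ℝ)} (hV : IsOpen V) {f} {i : Fin d}
    (h0 : ∀ y ∈ V, f y = 0) : ∀ y ∈ V, pderiv' i f y = 0 := by
  intro y hy
  have hev : f =ᶠ[nhds y] (fun _ => (0:ℝ)) :=
    Filter.eventuallyEq_of_mem (hV.mem_nhds hy) h0
  simp [pderiv', hev.fderiv_eq]

lemma pderiv'_iter_eq_zero_on {d : ℕ} {V : Set (Fin d → ℝ)} (hV : IsOpen V) {i : Fin d}
    (j : ℕ) : ∀ f, (∀ y ∈ V, f y = 0) → ∀ y ∈ V, (pderiv' i)^[j] f y = 0 := by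
  induction j with
  | zero => intro f h0; simpa using h0
  | succ j ih =>
    intro f h0
    simp only [Function.iterate_succ_apply']
    exact pderiv'_eq_zero_on hV (ih f h0)

lemma multiDeriv_eq_zero_on {d : ℕ} {V : Set (Fin d → ℝ)} (hV : IsOpen V) (α : Fin d → ℕ) {f}
    (h0 : ∀ y ∈ V, f y = 0) : ∀ y ∈ V, multiDeriv α f y = 0 := by
  rw [multiDeriv]
  induction (List.finRange d) with
  | nil => simpa using h0
  | cons i l ih =>
    simp only [List.foldr_cons]
    exact pderiv'_iter_eq_zero_on hV (α i) _ ih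

lemma Tstar_eq_zero_outside {d : ℕ} {n : ℕ} {a : (Fin d → ℕ) → (Fin d → ℝ) → ℝ}
    {φ : (Fin d → ℝ) → ℝ} {y : Fin d → ℝ} (hy : y ∉ tsupport φ) : Tstar n a φ y = 0 := by
  rw [Tstar]
  refine Finset.sum_eq_zero fun α _ => ?_
  have h0 : ∀ z ∈ (tsupport φ)ᶜ, a α z * φ z = 0 := fun z hz => by
    simp [image_eq_zero_of_notMem_tsupport hz]
  rw [multiDeriv_eq_zero_on (isClosed_tsupport φ).isOpen_compl α h0 y hy, mul_zero]

lemma Tstar_continuous {d : ℕ} {D : Set (Fin d → ℝ)} (hD : IsOpen D) {n : ℕ}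
    {a : (Fin d → ℕ) → (Fin d → ℝ) → ℝ}
    (ha : ∀ α ∈ multiIdx d n, ContDiffOn ℝ ((∑ i, α i : ℕ) : ℕ∞) (a α) D)
    {φ : (Fin d → ℝ) → ℝ} (hφ : IsTestFun D φ) : Continuous (Tstar n a φ) := by
  show Continuous fun y => ∑ α ∈ multiIdx d n, (-1:ℝ)^(∑ i, α i) * multiDeriv α (fun z => a α z * φ z) y
  refine continuous_finset_sum _ fun α hα => Continuous.mul continuous_const ?_
  have hCD : ContDiffOn ℝ ((∑ i, α i : ℕ) : ℕ∞) (fun z => a α z * φ z) D :=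
    (ha α hα).mul (hφ.1.of_le (by exact_mod_cast le_top)).contDiffOn
  have hcont : ContinuousOn (multiDeriv α fun z => a α z * φ z) D :=
    multiDeriv_continuousOn hD hCD
  have h0 : ∀ z ∈ (tsupport φ)ᶜ, a α z * φ z = 0 := fun z hz => by
    simp [image_eq_zero_of_notMem_tsupport hz]
  have hzero := multiDeriv_eq_zero_on (isClosed_tsupport φ).isOpen_compl α h0
  rw [continuous_iff_continuousAt]
  intro y
  by_cases hy : y ∈ D
  · exact hcont.continuousAt (hD.mem_nhds hy)
  · have hy' : y ∈ (tsupport φ)ᶜ := fun h => hy (hφ.2.2 h)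
    have hev : (multiDeriv α fun z => a α z * φ z) =ᶠ[nhds y] (fun _ => (0:ℝ)) :=
      Filter.eventuallyEq_of_mem ((isClosed_tsupport φ).isOpen_compl.mem_nhds hy') hzero
    exact (continuousAt_congr hev).2 continuousAt_const

lemma Tstar_hasCompactSupport {d : ℕ} {D : Set (Fin d → ℝ)} {n : ℕ}
    {a : (Fin d → ℕ) → (Fin d → ℝ) → ℝ}
    {φ : (Fin d → ℝ) → ℝ} (hφ : IsTestFun D φ) : HasCompactSupport (Tstar n a φ) := by
  have hsub : tsupport (Tstar n a φ) ⊆ tsupport φ := by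
    refine closure_minimal ?_ (isClosed_tsupport φ)
    intro y hy
    by_contra h
    exact hy (Tstar_eq_zero_outside h)
  exact IsCompact.of_isClosed_subset hφ.2.1 (isClosed_tsupport _) hsub

lemma mylem.integrable_mul {Ω : Type*} [MeasurableSpace Ω] {P : Measure Ω} {f g : Ω → ℝ}
    (hf : MemLp f 2 P) (hg : MemLp g 2 P) : Integrable (fun ω => f ω * g ω) P := by
  have h1 : (1 : ℝ≥0∞) / 1 = 1 / 2 + 1 / 2 := by
    rw [ENNReal.div_add_div_same, one_add_one_eq_two, ENNReal.div_self (by norm_num) (by norm_num), ENNReal.div_self (by norm_num) (by norm_num)]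
  have := hg.smul (r := 1) hf
  rw [memLp_one_iff_integrable] at this
  exact this.congr (Filter.Eventually.of_forall fun ω => by simp [smul_eq_mul])

lemma mylem.cauchy_schwarz {Ω : Type*} [MeasurableSpace Ω] {P : Measure Ω} {f g : Ω → ℝ}
    (hf : MemLp f 2 P) (hg : MemLp g 2 P) :
    ∫ ω, |f ω * g ω| ∂P ≤ Real.sqrt (∫ ω, f ω * f ω ∂P) * Real.sqrt (∫ ω, g ω * g ω ∂P) := by
  have h2 : Real.HolderConjugate 2 2 := by constructor <;> norm_num
  have hof : ENNReal.ofReal (2:ℝ) = 2 := by norm_num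
  have h := integral_mul_norm_le_Lp_mul_Lq (μ := P) h2 (hof ▸ hf) (hof ▸ hg)
  have e1 : ∫ ω, ‖f ω‖ * ‖g ω‖ ∂P = ∫ ω, |f ω * g ω| ∂P := by
    congr 1; funext ω; rw [abs_mul]; rfl
  have e2 : ∀ (h : Ω → ℝ), ∫ ω, ‖h ω‖ ^ (2:ℝ) ∂P = ∫ ω, h ω * h ω ∂P := by
    intro h; congr 1; funext ω
    rw [show (2:ℝ) = ((2:ℕ):ℝ) by norm_num, Real.rpow_natCast]
    rw [Real.norm_eq_abs, sq_abs, sq]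
  rw [e1, e2, e2] at h
  calc ∫ ω, |f ω * g ω| ∂P ≤ (∫ ω, f ω * f ω ∂P) ^ (1/2:ℝ) * (∫ ω, g ω * g ω ∂P) ^ (1/2:ℝ) := h
  _ = _ := by rw [← Real.sqrt_eq_rpow, ← Real.sqrt_eq_rpow]

lemma mylem.integrableOn_of_zero_off {X : Type*} [MeasurableSpace X] {μ : Measure X}
    {f : X → ℝ} {K D : Set X} (hK : MeasurableSet K) (hD : MeasurableSet D)
    (hfK : IntegrableOn f K μ) (h0 : ∀ y ∈ D \ K, f y = 0) : IntegrableOn f D μ := by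
  have h1 : IntegrableOn f (D \ K) μ := by
    have hae : ∀ᵐ y ∂(μ.restrict (D \ K)), f y = 0 :=
      (ae_restrict_iff' (hD.diff hK)).2 (Filter.Eventually.of_forall h0)
    exact (integrable_zero _ _ _).congr (hae.mono fun y hy => hy.symm)
  exact (hfK.union h1).mono_set (fun y hy => by by_cases h : y ∈ K; exact Set.mem_union_left _ h; exact Set.mem_union_right _ ⟨hy, h⟩)

/-- if almost surely `T(U) = 0` in the sense of distributions, then
`T(k_x) = 0` in the sense of distributions for every `x ∈ D`. -/
theorem stmt_1 {d : ℕ} {Ω : Type*} [MeasurableSpace Ω] (P : Measure Ω) [IsProbabilityMeasure P]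
    (D : Set (Fin d → ℝ)) (hD : IsOpen D)
    (U : Ω → (Fin d → ℝ) → ℝ)
    (hU_meas : Measurable (Function.uncurry U))
    (hU_L2 : ∀ x ∈ D, MemLp (fun ω => U ω x) 2 P)
    (m : (Fin d → ℝ) → ℝ) (hm : ∀ x ∈ D, m x = ∫ ω, U ω x ∂P)
    (k : (Fin d → ℝ) → (Fin d → ℝ) → ℝ)
    (hk : ∀ x ∈ D, ∀ y ∈ D, k x y = ∫ ω, (U ω x - m x) * (U ω y - m y) ∂P)
    (σ : (Fin d → ℝ) → ℝ) (hσ : ∀ x ∈ D, σ x = Real.sqrt (k x x))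
    (hm_loc : ∀ K ⊆ D, IsCompact K → IntegrableOn m K volume)
    (hσ_loc : ∀ K ⊆ D, IsCompact K → IntegrableOn σ K volume)
    (n : ℕ) (a : (Fin d → ℕ) → (Fin d → ℝ) → ℝ)
    (ha : ∀ α ∈ multiIdx d n, ContDiffOn ℝ ((∑ i, α i : ℕ) : ℕ∞) (a α) D)
    (hmean : ∀ φ, IsTestFun D φ → ∫ x in D, m x * Tstar n a φ x = 0)
    (htraj : ∃ A : Set Ω, MeasurableSet A ∧ P A = 1 ∧
      ∀ ω ∈ A, ∀ φ, IsTestFun D φ → ∫ x in D, U ω x * Tstar n a φ x = 0) :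
    ∀ x ∈ D, ∀ φ, IsTestFun D φ → ∫ y in D, k x y * Tstar n a φ y = 0 := by
  intro x hx φ hφ
  classical
  have hψcont : Continuous (Tstar n a φ) := Tstar_continuous hD ha hφ
  obtain ⟨C, hC⟩ := (Tstar_hasCompactSupport (D := D) hφ).exists_bound_of_continuous hψcont
  set ψ : (Fin d → ℝ) → ℝ := Tstar n a φ with hψdef
  set K : Set (Fin d → ℝ) := tsupport φ with hKdef
  have hKD : K ⊆ D := hφ.2.2
  have hKc : IsCompact K := hφ.2.1
  have hψ0 : ∀ y, y ∉ K → ψ y = 0 := fun y hy => Tstar_eq_zero_outside hy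
  set g : (Fin d → ℝ) → ℝ := fun y => ∫ ω, U ω y ∂P with hgdef
  have hg_sm : StronglyMeasurable g := by
    have h1 : StronglyMeasurable (fun p : (Fin d → ℝ) × Ω => U p.2 p.1) :=
      (hU_meas.comp measurable_swap).stronglyMeasurable
    exact h1.integral_prod_right'
  set F : Ω → ℝ := fun ω => U ω x - m x with hFdef
  have hF_meas : Measurable F :=
    (hU_meas.comp (measurable_id.prodMk measurable_const)).sub measurable_const
  have hF2 : MemLp F 2 P := (hU_L2 x hx).sub (memLp_const (m x))
  set G : (Fin d → ℝ) → Ω → ℝ := fun y ω => U ω y - g y with hGdef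
  have hG2 : ∀ y ∈ D, MemLp (G y) 2 P := fun y hy => (hU_L2 y hy).sub (memLp_const _)
  have hmg : ∀ y ∈ D, m y = g y := fun y hy => hm y hy
  have hk' : ∀ y ∈ D, k x y = ∫ ω, F ω * G y ω ∂P := by
    intro y hy; rw [hk x hx y hy, hmg y hy]
  have hσx : Real.sqrt (∫ ω, F ω * F ω ∂P) = σ x := by
    rw [hσ x hx, hk x hx x hx]
  have hσy : ∀ y ∈ D, Real.sqrt (∫ ω, G y ω * G y ω ∂P) = σ y := by
    intro y hy; rw [hσ y hy, hk y hy y hy, hmg y hy]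
  have hσ_nonneg : ∀ y ∈ D, 0 ≤ σ y := fun y hy => by
    rw [hσ y hy]; exact Real.sqrt_nonneg _
  have hCS : ∀ y ∈ D, ∫ ω, |F ω * G y ω| ∂P ≤ σ x * σ y := fun y hy => le_trans
    (mylem.cauchy_schwarz hF2 (hG2 y hy)) (by rw [hσx, hσy y hy])
  set W : (Fin d → ℝ) × Ω → ℝ := fun p => (F p.2 * G p.1 p.2) * ψ p.1 with hWdef
  have hW_meas : Measurable W := by
    have h1 : Measurable fun p : (Fin d → ℝ) × Ω => U p.2 p.1 := hU_meas.comp measurable_swap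
    exact ((hF_meas.comp measurable_snd).mul
      (h1.sub (hg_sm.measurable.comp measurable_fst))).mul
      (hψcont.measurable.comp measurable_fst)
  have hW_aesm : AEStronglyMeasurable W ((volume.restrict D).prod P) :=
    hW_meas.aestronglyMeasurable
  have hWnorm : ∀ y ∈ D, ∫ ω, ‖W (y, ω)‖ ∂P ≤ (C * σ x) * |σ y| := by
    intro y hy
    have h1 : ∫ ω, ‖W (y, ω)‖ ∂P = (∫ ω, |F ω * G y ω| ∂P) * |ψ y| := by
      rw [← integral_mul_const]; congr 1; funext ω
      rw [Real.norm_eq_abs, abs_mul]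
    rw [h1]
    calc (∫ ω, |F ω * G y ω| ∂P) * |ψ y| ≤ (σ x * σ y) * C := by
          refine mul_le_mul (hCS y hy) (by simpa using hC y) (abs_nonneg _)
            (mul_nonneg (hσ_nonneg x hx) (hσ_nonneg y hy))
      _ = (C * σ x) * |σ y| := by rw [abs_of_nonneg (hσ_nonneg y hy)]; ring
  have hWint : Integrable W ((volume.restrict D).prod P) := by
    rw [integrable_prod_iff hW_aesm]
    constructor
    · refine (ae_restrict_iff' hD.measurableSet).2 (Filter.Eventually.of_forall fun y hy => ?_)
      exact (mylem.integrable_mul hF2 (hG2 y hy)).mul_const (ψ y)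
    · have haesm : AEStronglyMeasurable (fun y => ∫ ω, ‖W (y, ω)‖ ∂P) (volume.restrict D) :=
        hW_aesm.norm.integral_prod_right'
      apply mylem.integrableOn_of_zero_off hKc.measurableSet hD.measurableSet
      · refine Integrable.mono' ((hσ_loc K hKD hKc).abs.const_mul (C * σ x))
          (haesm.mono_measure (Measure.restrict_mono hKD le_rfl)) ?_
        refine (ae_restrict_iff' hKc.measurableSet).2 (Filter.Eventually.of_forall fun y hy => ?_)
        rw [Real.norm_of_nonneg (integral_nonneg fun ω => norm_nonneg _)]
        exact hWnorm y (hKD hy)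
      · intro y hy
        have : ∀ ω, W (y, ω) = 0 := fun ω => by
          simp only [hWdef]; rw [hψ0 y hy.2, mul_zero]
        simp [this]
  have hslice : ∀ᵐ ω ∂P, Integrable (fun y => W (y, ω)) (volume.restrict D) :=
    hWint.prod_left_ae
  obtain ⟨A, hAm, hA1, hAtr⟩ := htraj
  have hAae : ∀ᵐ ω ∂P, ω ∈ A := by
    rw [ae_iff]
    have h1 : {ω | ¬ ω ∈ A} = Aᶜ := rfl
    rw [h1, measure_compl hAm (measure_ne_top P A), hA1, measure_univ, tsub_self]
  have hgψK : IntegrableOn (fun y => g y * ψ y) K volume := by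
    have hgK : IntegrableOn g K volume :=
      (hm_loc K hKD hKc).congr_fun (fun y hy => hmg y (hKD hy)) hKc.measurableSet
    have := hgK.bdd_mul (hψcont.aestronglyMeasurable.restrict) (Filter.Eventually.of_forall hC)
    exact this.congr (Filter.Eventually.of_forall fun y => mul_comm (ψ y) (g y))
  have hgψD : IntegrableOn (fun y => g y * ψ y) D volume :=
    mylem.integrableOn_of_zero_off hKc.measurableSet hD.measurableSet hgψK
      (fun y hy => by rw [hψ0 y hy.2, mul_zero])
  have hgψ0 : ∫ y in D, g y * ψ y = 0 := by
    rw [← hmean φ hφ]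
    exact setIntegral_congr_fun hD.measurableSet (fun y hy => by rw [← hmg y hy])
  have hkey : ∀ᵐ ω ∂P, ∫ y in D, W (y, ω) ∂volume = 0 := by
    filter_upwards [hslice, hAae] with ω hsl hωA
    by_cases hF0 : F ω = 0
    · simp only [hWdef, hF0, zero_mul]
      simp
    · have hGψ : Integrable (fun y => G y ω * ψ y) (volume.restrict D) := by
        have h2 := hsl.const_mul (F ω)⁻¹
        refine h2.congr (Filter.Eventually.of_forall fun y => ?_)
        show (F ω)⁻¹ * ((F ω * G y ω) * ψ y) = G y ω * ψ y
        field_simp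
      have hUψ : Integrable (fun y => U ω y * ψ y) (volume.restrict D) := by
        refine (hGψ.add hgψD).congr (Filter.Eventually.of_forall fun y => ?_)
        show G y ω * ψ y + g y * ψ y = U ω y * ψ y
        simp only [hGdef]; ring
      have hint1 : ∫ y in D, U ω y * ψ y = 0 := hAtr ω hωA φ hφ
      have hGψ0 : ∫ y in D, G y ω * ψ y ∂volume = 0 := by
        have hsplit : (fun y => G y ω * ψ y) = fun y => U ω y * ψ y - g y * ψ y := by
          funext y; simp only [hGdef]; ring
        rw [hsplit, integral_sub hUψ hgψD, hint1, hgψ0, sub_zero]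
      calc ∫ y in D, W (y, ω) ∂volume = ∫ y in D, F ω * (G y ω * ψ y) ∂volume := by
            simp only [hWdef, mul_assoc]
        _ = F ω * ∫ y in D, G y ω * ψ y ∂volume := integral_const_mul _ _
        _ = 0 := by rw [hGψ0, mul_zero]
  calc ∫ y in D, k x y * ψ y
      = ∫ y in D, (∫ ω, F ω * G y ω ∂P) * ψ y :=
        setIntegral_congr_fun hD.measurableSet (fun y hy => by rw [hk' y hy])
    _ = ∫ y in D, ∫ ω, W (y, ω) ∂P :=
        setIntegral_congr_fun hD.measurableSet (fun y hy => by rw [← integral_mul_const])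
    _ = ∫ ω, ∫ y in D, W (y, ω) ∂volume ∂P := integral_integral_swap hWint
    _ = ∫ ω, (0:ℝ) ∂P := integral_congr_ae hkey
    _ = 0 := integral_zero _ _
end

section
/- Let c > 0, t ∈ ℝ, 1 ≤ p < ∞, and let u₀ : ℝ³ → ℝ be continuously differentiable with u₀ ∈ L^p(ℝ³) and with the function x ↦ |∇u₀(x)|_p (the vector p-norm of the gradient) in L^p(ℝ³). Define (Ḟ_t ∗ u₀)(x) = (1/(4π)) ∫_{S²} [ u₀(x − c|t|γ) − c t ⟨γ, ∇u₀(x − c|t|γ)⟩ ] dσ_{S²}(γ), where σ_{S²} is the surface measure on the unit sphere S² ⊂ ℝ³ (total mass 4π). Then Ḟ_t ∗ u₀ ∈ L^p(ℝ³) with ‖Ḟ_t ∗ u₀‖_{L^p} ≤ ‖u₀‖_{L^p} + C_p c |t| · ‖ |∇u₀|_p ‖_{L^p}, where C_p = ( (1/(4π)) ∫_{S²} |γ|_q^p dσ_{S²}(γ) )^{1/p} and q is the conjugate exponent, 1/p + 1/q = 1. -/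
open MeasureTheory Real
open scoped ENNReal RealInnerProductSpace

/-- The surface measure on the unit sphere `S² ⊂ ℝ³` (total mass `4π`). -/
noncomputable def sphMeas : Measure (Metric.sphere (0 : EuclideanSpace ℝ (Fin 3)) 1) :=
  (volume : Measure (EuclideanSpace ℝ (Fin 3))).toSphere

/-- The vector `r`-norm `|v|_r = (Σ |v_i|^r)^{1/r}` on `ℝ³` (max of coordinates for `r = ∞`). -/
noncomputable def vnorm (r : ℝ≥0∞) (v : EuclideanSpace ℝ (Fin 3)) : ℝ :=
  if r = ∞ then ⨆ i, |v i| else (∑ i, |v i| ^ r.toReal) ^ (1 / r.toReal)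

section aux

local notation "E" => EuclideanSpace ℝ (Fin 3)

lemma vnorm_nonneg (r : ℝ≥0∞) (v : E) : 0 ≤ vnorm r v := by
  unfold vnorm
  split_ifs
  · exact Real.iSup_nonneg fun i => abs_nonneg _
  · exact Real.rpow_nonneg (Finset.sum_nonneg fun i _ => Real.rpow_nonneg (abs_nonneg _) _) _

lemma measurable_vnorm (r : ℝ≥0∞) : Measurable (vnorm r) := by
  have hcoord : ∀ i : Fin 3, Measurable fun v : E => |v i| := by
    intro i
    exact ((EuclideanSpace.proj (𝕜 := ℝ) i).continuous.measurable).abs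
  unfold vnorm
  split_ifs
  · exact Measurable.iSup hcoord
  · exact (Finset.measurable_sum _ fun i _ => (hcoord i).pow_const _).pow_const _

lemma abs_coord_le_norm (v : E) (i : Fin 3) : |v i| ≤ ‖v‖ := by
  rw [EuclideanSpace.norm_eq, ← Real.sqrt_sq_eq_abs]
  apply Real.sqrt_le_sqrt
  simp only [Real.norm_eq_abs, sq_abs]
  exact Finset.single_le_sum (f := fun j => v j ^ 2) (fun j _ => sq_nonneg _)
    (Finset.mem_univ i)

lemma vnorm_le_three {r : ℝ≥0∞} (hr : 1 ≤ r) {v : E} (hv : ∀ i, |v i| ≤ 1) :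
    vnorm r v ≤ 3 := by
  unfold vnorm
  split_ifs with h
  · exact ciSup_le fun i => (hv i).trans (by norm_num)
  · have hrt : 1 ≤ r.toReal := by
      rw [← ENNReal.toReal_one]; exact ENNReal.toReal_mono h hr
    have h1 : (∑ i, |v i| ^ r.toReal) ≤ 3 := by
      calc (∑ i, |v i| ^ r.toReal) ≤ ∑ _i : Fin 3, (1:ℝ) :=
            Finset.sum_le_sum fun i _ =>
              Real.rpow_le_one (abs_nonneg _) (hv i) (by linarith)
        _ = 3 := by simp
    calc (∑ i, |v i| ^ r.toReal) ^ (1 / r.toReal)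
        ≤ (3:ℝ) ^ (1 / r.toReal) := by
          apply Real.rpow_le_rpow (Finset.sum_nonneg fun i _ => Real.rpow_nonneg (abs_nonneg _) _)
            h1 (by positivity)
      _ ≤ (3:ℝ) ^ (1:ℝ) := by
          apply Real.rpow_le_rpow_of_exponent_le (by norm_num)
          rw [div_le_one (by linarith)]; linarith
      _ = 3 := by norm_num

lemma inner_sum' (γ w : E) : ⟪γ, w⟫ = ∑ i, γ i * w i := by
  simp [PiLp.inner_apply, RCLike.inner_apply, starRingEnd_apply]
  exact Finset.sum_congr rfl fun i _ => mul_comm _ _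

lemma abs_inner_le_vnorm {p q : ℝ≥0∞} (hp1 : 1 ≤ p) (hp2 : p ≠ ∞) (hpq : 1 / p + 1 / q = 1)
    (γ w : E) : |⟪γ, w⟫| ≤ vnorm q γ * vnorm p w := by
  have habs : |⟪γ, w⟫| ≤ ∑ i, |γ i| * |w i| := by
    rw [inner_sum']
    exact (Finset.abs_sum_le_sum_abs _ _).trans (le_of_eq (by simp [abs_mul]))
  rcases eq_or_lt_of_le hp1 with hp1' | hp1'
  · -- p = 1, q = ∞
    have hq : q = ∞ := by
      have h1 : (1:ℝ≥0∞) + 1 / q = 1 := by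
        have := hpq
        rw [← hp1'] at this
        simpa using this
      have h2 : 1 / q = 0 := by
        have h3 : (1:ℝ≥0∞) + 1 / q = 1 + 0 := by rw [add_zero]; exact h1
        exact (ENNReal.add_right_inj (by norm_num)).mp h3
      rw [one_div] at h2
      exact ENNReal.inv_eq_zero.mp h2
    subst hq
    rw [← hp1']
    have hvq : vnorm ⊤ γ = ⨆ i, |γ i| := by simp [vnorm]
    have hvp : vnorm 1 w = ∑ i, |w i| := by
      simp [vnorm, Real.rpow_one]
    rw [hvq, hvp, Finset.mul_sum]
    refine habs.trans (Finset.sum_le_sum fun i _ => ?_)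
    exact mul_le_mul_of_nonneg_right
      (le_ciSup (f := fun j => |γ j|) (Set.Finite.bddAbove (Set.finite_range _)) i) (abs_nonneg _)
  · -- 1 < p, q finite
    have hp0 : p ≠ 0 := (zero_lt_one.trans hp1').ne'
    have hqtop : q ≠ ∞ := by
      intro h
      rw [h] at hpq
      simp only [one_div, ENNReal.inv_top, add_zero] at hpq
      exact hp1'.ne' (ENNReal.inv_eq_one.mp hpq)
    have hqne0 : q ≠ 0 := by
      intro h
      rw [h] at hpq
      simp [ENNReal.div_zero] at hpq
    have hptr : 0 < p.toReal := ENNReal.toReal_pos hp0 hp2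
    have hqtr : 0 < q.toReal := ENNReal.toReal_pos hqne0 hqtop
    have hconj : p.toReal.HolderConjugate q.toReal := by
      rw [Real.holderConjugate_iff]; constructor
      · rw [← ENNReal.toReal_one]
        exact ENNReal.toReal_strict_mono hp2 hp1'
      · have := congrArg ENNReal.toReal hpq
        rw [ENNReal.toReal_add, ENNReal.toReal_div, ENNReal.toReal_div] at this
        · simpa using this
        · simp [ENNReal.div_eq_top, hp0]
        · simp [ENNReal.div_eq_top, hqne0]
    have hH := Real.inner_le_Lp_mul_Lq_of_nonneg (s := (Finset.univ : Finset (Fin 3)))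
      (f := fun i => |γ i|) (g := fun i => |w i|) hconj.symm
      (fun i _ => abs_nonneg _) (fun i _ => abs_nonneg _)
    refine habs.trans (hH.trans (le_of_eq ?_))
    have hvq : vnorm q γ = (∑ i, |γ i| ^ q.toReal) ^ (1 / q.toReal) := by
      simp [vnorm, hqtop]
    have hvp : vnorm p w = (∑ i, |w i| ^ p.toReal) ^ (1 / p.toReal) := by
      simp [vnorm, hp2]
    rw [hvq, hvp]

/-- Jensen-type inequality for `∫⁻` against a finite measure. -/
lemma lintegral_pow_le {S : Type*} [MeasurableSpace S] (ν : Measure S)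
    {G : S → ℝ≥0∞} (hG : AEMeasurable G ν) {r : ℝ} (hr : 1 ≤ r) :
    (∫⁻ y, G y ∂ν) ^ r ≤ ν Set.univ ^ (r - 1) * ∫⁻ y, G y ^ r ∂ν := by
  rcases eq_or_lt_of_le hr with hr' | hr'
  · rw [← hr']
    simp
  · have hr0 : (0:ℝ) < r := lt_trans zero_lt_one hr'
    have hc : r.HolderConjugate r.conjExponent := Real.HolderConjugate.conjExponent hr'
    have hH := ENNReal.lintegral_mul_le_Lp_mul_Lq ν hc hG (aemeasurable_const (b := (1:ℝ≥0∞)))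
    simp only [Pi.mul_apply, mul_one, ENNReal.one_rpow, lintegral_const, one_mul] at hH
    have h2 : (∫⁻ y, G y ∂ν) ^ r ≤
        (((∫⁻ y, G y ^ r ∂ν) ^ (1/r)) * (ν Set.univ ^ (1/r.conjExponent))) ^ r :=
      ENNReal.rpow_le_rpow hH hr0.le
    refine h2.trans (le_of_eq ?_)
    rw [ENNReal.mul_rpow_of_nonneg _ _ hr0.le, ← ENNReal.rpow_mul, ← ENNReal.rpow_mul,
      one_div_mul_cancel hr0.ne', ENNReal.rpow_one]
    have hce : 1 / r.conjExponent * r = r - 1 := by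
      rw [Real.conjExponent]
      field_simp
    rw [hce, mul_comm]

/-- Minkowski-lite: `L^r`-norm (to the `r`-th power) of an `∫⁻` over a finite measure. -/
lemma lintegral_lintegral_pow_le {S : Type*} [MeasurableSpace S] (ν : Measure S)
    [IsFiniteMeasure ν] {G : E × S → ℝ≥0∞} (hG : Measurable G) {r : ℝ} (hr : 1 ≤ r) :
    ∫⁻ x, (∫⁻ γ, G (x, γ) ∂ν) ^ r ∂(volume : Measure E) ≤
      ν Set.univ ^ (r - 1) * ∫⁻ γ, (∫⁻ x, G (x, γ) ^ r ∂(volume : Measure E)) ∂ν := by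
  have hr0 : (0:ℝ) < r := lt_of_lt_of_le zero_lt_one hr
  calc ∫⁻ x, (∫⁻ γ, G (x, γ) ∂ν) ^ r ∂(volume : Measure E)
      ≤ ∫⁻ x, ν Set.univ ^ (r - 1) * ∫⁻ γ, G (x, γ) ^ r ∂ν ∂(volume : Measure E) := by
        refine lintegral_mono fun x => ?_
        exact lintegral_pow_le ν ((hG.comp measurable_prodMk_left).aemeasurable) hr
    _ = ν Set.univ ^ (r - 1) * ∫⁻ x, ∫⁻ γ, G (x, γ) ^ r ∂ν ∂(volume : Measure E) := by
        rw [lintegral_const_mul']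
        exact ENNReal.rpow_ne_top_of_nonneg (by linarith) (measure_ne_top ν _)
    _ = ν Set.univ ^ (r - 1) * ∫⁻ γ, ∫⁻ x, G (x, γ) ^ r ∂(volume : Measure E) ∂ν := by
        rw [lintegral_lintegral_swap]
        exact (hG.pow_const r).aemeasurable

lemma sphMeas_univ : sphMeas Set.univ = ENNReal.ofReal (4 * π) := by
  rw [sphMeas, MeasureTheory.Measure.toSphere_apply_univ]
  rw [EuclideanSpace.volume_ball]
  have hcard : (Fintype.card (Fin 3)) = 3 := by simp
  rw [hcard]
  have hdim : Module.finrank ℝ (EuclideanSpace ℝ (Fin 3)) = 3 := by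
    simp [finrank_euclideanSpace]
  rw [hdim]
  have hG : Real.Gamma ((3:ℕ) / 2 + 1) = 3 / 4 * Real.sqrt π := by
    push_cast
    have h1 : (3:ℝ) / 2 + 1 = 1 / 2 + 1 + 1 := by norm_num
    rw [h1, Real.Gamma_add_one (by norm_num), Real.Gamma_add_one (by norm_num),
      Real.Gamma_one_half_eq]
    ring
  rw [hG]
  have hs : Real.sqrt π ^ 3 = π * Real.sqrt π := by
    have : Real.sqrt π ^ 3 = Real.sqrt π ^ 2 * Real.sqrt π := by ring
    rw [this, Real.sq_sqrt Real.pi_pos.le]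
  have hval : Real.sqrt π ^ (3:ℕ) / (3 / 4 * Real.sqrt π) = 4 / 3 * π := by
    rw [hs]
    have hsp : Real.sqrt π ≠ 0 := by positivity
    field_simp
  rw [hval]
  rw [ENNReal.ofReal_one, one_pow, one_mul]
  rw [show ((3:ℕ) : ℝ≥0∞) = ENNReal.ofReal 3 by simp]
  rw [← ENNReal.ofReal_mul (by norm_num)]
  congr 1
  ring

end aux

/-- `L^p` estimate `‖Ḟ_t ∗ u₀‖_p ≤ ‖u₀‖_p + C_p c |t| ‖ |∇u₀|_p ‖_p` for the
propagator applied to a `C¹` initial position `u₀`, where `1/p + 1/q = 1` and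
`C_p = ((1/(4π)) ∫_{S²} |γ|_q^p dσ)^{1/p}`. -/
theorem stmt_9 (c : ℝ) (hc : 0 < c) (t : ℝ) (p q : ℝ≥0∞)
    (hp1 : 1 ≤ p) (hp2 : p ≠ ∞) (hpq : 1 / p + 1 / q = 1)
    (u₀ : EuclideanSpace ℝ (Fin 3) → ℝ) (hu₀ : ContDiff ℝ 1 u₀)
    (hu₀p : MemLp u₀ p volume)
    (hgrad : MemLp (fun x => vnorm p (gradient u₀ x)) p volume) :
    MemLp (fun x => (1 / (4 * π)) *
        ∫ γ : Metric.sphere (0 : EuclideanSpace ℝ (Fin 3)) 1,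
          (u₀ (x - (c * |t|) • (γ : EuclideanSpace ℝ (Fin 3))) -
            c * t * ⟪(γ : EuclideanSpace ℝ (Fin 3)),
              gradient u₀ (x - (c * |t|) • (γ : EuclideanSpace ℝ (Fin 3)))⟫) ∂sphMeas) p volume ∧
    eLpNorm (fun x => (1 / (4 * π)) *
        ∫ γ : Metric.sphere (0 : EuclideanSpace ℝ (Fin 3)) 1,
          (u₀ (x - (c * |t|) • (γ : EuclideanSpace ℝ (Fin 3))) -
            c * t * ⟪(γ : EuclideanSpace ℝ (Fin 3)),
              gradient u₀ (x - (c * |t|) • (γ : EuclideanSpace ℝ (Fin 3)))⟫) ∂sphMeas) p volume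
      ≤ eLpNorm u₀ p volume +
        ENNReal.ofReal
          ((((1 / (4 * π)) * ∫ γ : Metric.sphere (0 : EuclideanSpace ℝ (Fin 3)) 1,
              vnorm q (γ : EuclideanSpace ℝ (Fin 3)) ^ p.toReal ∂sphMeas) ^ (1 / p.toReal))
            * c * |t|) *
          eLpNorm (fun x => vnorm p (gradient u₀ x)) p volume := by
  classical
  have hπ : (0:ℝ) < π := Real.pi_pos
  have h4π : (0:ℝ) < 4 * π := by linarith
  haveI hfin : IsFiniteMeasure sphMeas := by unfold sphMeas; infer_instance
  set r := p.toReal with hrdef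
  have hr1 : (1:ℝ) ≤ r := by
    rw [hrdef, ← ENNReal.toReal_one]; exact ENNReal.toReal_mono hp2 hp1
  have hr0 : (0:ℝ) < r := lt_of_lt_of_le zero_lt_one hr1
  have hp0 : p ≠ 0 := (zero_lt_one.trans_le hp1).ne'
  have hq1 : 1 ≤ q := by
    have h1 : 1 / q ≤ 1 / p + 1 / q := self_le_add_left _ _
    rw [hpq, one_div] at h1
    exact ENNReal.inv_le_one.mp h1
  have hcu : Continuous u₀ := hu₀.continuous
  have hcg : Continuous (gradient u₀) := by
    unfold gradient
    exact ((InnerProductSpace.toDual ℝ _).symm.continuous).comp (hu₀.continuous_fderiv one_ne_zero)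
  set a : ℝ := c * |t| with hadef
  set g : EuclideanSpace ℝ (Fin 3) → ℝ := fun x => vnorm p (gradient u₀ x) with hgdef
  have hg0 : ∀ x, 0 ≤ g x := fun x => vnorm_nonneg _ _
  have hgm : Measurable g := (measurable_vnorm p).comp hcg.measurable
  have hsub : Continuous fun z : (EuclideanSpace ℝ (Fin 3)) ×
      (Metric.sphere (0 : EuclideanSpace ℝ (Fin 3)) 1) =>
      z.1 - a • (z.2 : EuclideanSpace ℝ (Fin 3)) :=
    continuous_fst.sub ((continuous_subtype_val.comp continuous_snd).const_smul a)
  have hc1 : Continuous fun z : (EuclideanSpace ℝ (Fin 3)) ×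
      (Metric.sphere (0 : EuclideanSpace ℝ (Fin 3)) 1) =>
      u₀ (z.1 - a • (z.2 : EuclideanSpace ℝ (Fin 3))) := hcu.comp hsub
  have hc2 : Continuous fun z : (EuclideanSpace ℝ (Fin 3)) ×
      (Metric.sphere (0 : EuclideanSpace ℝ (Fin 3)) 1) =>
      c * t * ⟪(z.2 : EuclideanSpace ℝ (Fin 3)),
        gradient u₀ (z.1 - a • (z.2 : EuclideanSpace ℝ (Fin 3)))⟫ :=
    continuous_const.mul ((continuous_subtype_val.comp continuous_snd).inner (hcg.comp hsub))
  set F₁ : EuclideanSpace ℝ (Fin 3) → ℝ := fun x =>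
    ∫ γ : Metric.sphere (0 : EuclideanSpace ℝ (Fin 3)) 1,
      u₀ (x - a • (γ : EuclideanSpace ℝ (Fin 3))) ∂sphMeas with hF1def
  set F₂ : EuclideanSpace ℝ (Fin 3) → ℝ := fun x =>
    ∫ γ : Metric.sphere (0 : EuclideanSpace ℝ (Fin 3)) 1,
      c * t * ⟪(γ : EuclideanSpace ℝ (Fin 3)),
        gradient u₀ (x - a • (γ : EuclideanSpace ℝ (Fin 3)))⟫ ∂sphMeas with hF2def
  have hF1m : AEStronglyMeasurable F₁ volume :=
    (hc1.stronglyMeasurable.integral_prod_right').aestronglyMeasurable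
  have hF2m : AEStronglyMeasurable F₂ volume :=
    (hc2.stronglyMeasurable.integral_prod_right').aestronglyMeasurable
  have hi1 : ∀ x, Integrable (fun γ : Metric.sphere (0 : EuclideanSpace ℝ (Fin 3)) 1 =>
      u₀ (x - a • (γ : EuclideanSpace ℝ (Fin 3)))) sphMeas := fun x =>
    ((hcu.comp (continuous_const.sub (continuous_subtype_val.const_smul a)))).integrable_of_hasCompactSupport
      (HasCompactSupport.of_compactSpace _)
  have hi2 : ∀ x, Integrable (fun γ : Metric.sphere (0 : EuclideanSpace ℝ (Fin 3)) 1 =>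
      c * t * ⟪(γ : EuclideanSpace ℝ (Fin 3)),
        gradient u₀ (x - a • (γ : EuclideanSpace ℝ (Fin 3)))⟫) sphMeas := fun x =>
    (continuous_const.mul (continuous_subtype_val.inner
      (hcg.comp (continuous_const.sub (continuous_subtype_val.const_smul a))))).integrable_of_hasCompactSupport
      (HasCompactSupport.of_compactSpace _)
  have hFeq : (fun x => (1 / (4 * π)) *
      ∫ γ : Metric.sphere (0 : EuclideanSpace ℝ (Fin 3)) 1,
        (u₀ (x - a • (γ : EuclideanSpace ℝ (Fin 3))) -
          c * t * ⟪(γ : EuclideanSpace ℝ (Fin 3)),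
            gradient u₀ (x - a • (γ : EuclideanSpace ℝ (Fin 3)))⟫) ∂sphMeas) =
      fun x => (1 / (4 * π)) * (F₁ x - F₂ x) := by
    funext x
    rw [hF1def, hF2def]
    rw [integral_sub (hi1 x) (hi2 x)]
  -- basic eLpNorm formula
  have hsr : ∀ f : EuclideanSpace ℝ (Fin 3) → ℝ, eLpNorm f p volume =
      (∫⁻ x, (‖f x‖₊ : ℝ≥0∞) ^ r ∂volume) ^ (1 / r) := fun f => by
    exact eLpNorm_eq_lintegral_rpow_enorm_toReal hp0 hp2
  have hνU : sphMeas Set.univ = ENNReal.ofReal (4 * π) := sphMeas_univ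
  have hν0 : sphMeas Set.univ ≠ 0 := by rw [hνU]; exact (ENNReal.ofReal_pos.mpr h4π).ne'
  have hνtop : sphMeas Set.univ ≠ ∞ := by rw [hνU]; exact ENNReal.ofReal_ne_top
  -- Bound 1
  have hbound1 : ENNReal.ofReal (1 / (4 * π)) * eLpNorm F₁ p volume ≤ eLpNorm u₀ p volume := by
    set I := ∫⁻ x, (‖u₀ x‖₊ : ℝ≥0∞) ^ r ∂(volume : Measure (EuclideanSpace ℝ (Fin 3))) with hIdef
    have hG1 : Measurable fun z : (EuclideanSpace ℝ (Fin 3)) ×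
        (Metric.sphere (0 : EuclideanSpace ℝ (Fin 3)) 1) =>
        (‖u₀ (z.1 - a • (z.2 : EuclideanSpace ℝ (Fin 3)))‖₊ : ℝ≥0∞) := hc1.measurable.enorm
    have hkey : ∫⁻ x, (‖F₁ x‖₊ : ℝ≥0∞) ^ r ∂volume ≤ sphMeas Set.univ ^ r * I := by
      calc ∫⁻ x, (‖F₁ x‖₊ : ℝ≥0∞) ^ r ∂volume
          ≤ ∫⁻ x, (∫⁻ γ, (‖u₀ (x - a • (γ : EuclideanSpace ℝ (Fin 3)))‖₊ : ℝ≥0∞) ∂sphMeas) ^ r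
              ∂volume := by
            refine lintegral_mono fun x => ENNReal.rpow_le_rpow ?_ hr0.le
            exact enorm_integral_le_lintegral_enorm _
        _ ≤ sphMeas Set.univ ^ (r - 1) *
              ∫⁻ γ, (∫⁻ x, (‖u₀ (x - a • (γ : EuclideanSpace ℝ (Fin 3)))‖₊ : ℝ≥0∞) ^ r ∂volume)
                ∂sphMeas :=
            lintegral_lintegral_pow_le sphMeas hG1 hr1
        _ = sphMeas Set.univ ^ (r - 1) * ∫⁻ _γ, I ∂sphMeas := by
            congr 1
            refine lintegral_congr fun γ => ?_
            exact (measurePreserving_sub_right volume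
              (a • (γ : EuclideanSpace ℝ (Fin 3)))).lintegral_comp
              (hcu.measurable.enorm.pow_const r)
        _ = sphMeas Set.univ ^ (r - 1) * (I * sphMeas Set.univ) := by
            rw [lintegral_const]
        _ = sphMeas Set.univ ^ r * I := by
            rw [show sphMeas Set.univ ^ (r - 1) * (I * sphMeas Set.univ)
                = sphMeas Set.univ ^ (r - 1) * sphMeas Set.univ ^ (1:ℝ) * I by
              rw [ENNReal.rpow_one]; ring]
            rw [← ENNReal.rpow_add _ _ hν0 hνtop, sub_add_cancel]
    have h2 : eLpNorm F₁ p volume ≤ sphMeas Set.univ * eLpNorm u₀ p volume := by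
      rw [hsr F₁, hsr u₀]
      calc (∫⁻ x, (‖F₁ x‖₊ : ℝ≥0∞) ^ r ∂volume) ^ (1 / r)
          ≤ (sphMeas Set.univ ^ r * I) ^ (1 / r) :=
            ENNReal.rpow_le_rpow hkey (by positivity)
        _ = sphMeas Set.univ * I ^ (1 / r) := by
            rw [ENNReal.mul_rpow_of_nonneg _ _ (by positivity : (0:ℝ) ≤ 1 / r),
              ← ENNReal.rpow_mul, mul_one_div_cancel hr0.ne', ENNReal.rpow_one]
    calc ENNReal.ofReal (1 / (4 * π)) * eLpNorm F₁ p volume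
        ≤ ENNReal.ofReal (1 / (4 * π)) * (sphMeas Set.univ * eLpNorm u₀ p volume) :=
          mul_le_mul_right h2 _
      _ = (ENNReal.ofReal (1 / (4 * π)) * ENNReal.ofReal (4 * π)) * eLpNorm u₀ p volume := by
          rw [hνU]; ring
      _ = eLpNorm u₀ p volume := by
          rw [← ENNReal.ofReal_mul (by positivity), one_div_mul_cancel h4π.ne',
            ENNReal.ofReal_one, one_mul]
  -- Bound 2
  set Kreal := ∫ γ : Metric.sphere (0 : EuclideanSpace ℝ (Fin 3)) 1,
    vnorm q (γ : EuclideanSpace ℝ (Fin 3)) ^ r ∂sphMeas with hKdef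
  have hK0 : 0 ≤ Kreal :=
    integral_nonneg fun γ => Real.rpow_nonneg (vnorm_nonneg _ _) _
  have hbound2 : ENNReal.ofReal (1 / (4 * π)) * eLpNorm F₂ p volume ≤
      ENNReal.ofReal ((((1 / (4 * π)) * Kreal) ^ (1 / r)) * c * |t|) * eLpNorm g p volume := by
    set J := ∫⁻ x, (ENNReal.ofReal (g x)) ^ r
      ∂(volume : Measure (EuclideanSpace ℝ (Fin 3))) with hJdef
    have hJel : eLpNorm g p volume = J ^ (1 / r) := by
      rw [hsr g, hJdef]
      congr 1
      refine lintegral_congr fun x => ?_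
      rw [← enorm_eq_nnnorm, Real.enorm_eq_ofReal (hg0 x)]
    set K := ∫⁻ γ : Metric.sphere (0 : EuclideanSpace ℝ (Fin 3)) 1,
      (ENNReal.ofReal (vnorm q (γ : EuclideanSpace ℝ (Fin 3)))) ^ r ∂sphMeas with hKldef
    have hvq_meas : Measurable fun γ : Metric.sphere (0 : EuclideanSpace ℝ (Fin 3)) 1 =>
        vnorm q (γ : EuclideanSpace ℝ (Fin 3)) :=
      (measurable_vnorm q).comp continuous_subtype_val.measurable
    have hKint : Integrable (fun γ : Metric.sphere (0 : EuclideanSpace ℝ (Fin 3)) 1 =>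
        vnorm q (γ : EuclideanSpace ℝ (Fin 3)) ^ r) sphMeas := by
      refine Integrable.mono' (integrable_const ((3:ℝ) ^ r)) ?_ ?_
      · exact (hvq_meas.pow_const r).aestronglyMeasurable
      · refine Filter.Eventually.of_forall fun γ => ?_
        rw [Real.norm_eq_abs, abs_of_nonneg (Real.rpow_nonneg (vnorm_nonneg _ _) _)]
        refine Real.rpow_le_rpow (vnorm_nonneg _ _) ?_ hr0.le
        refine vnorm_le_three hq1 fun i => ?_
        exact (abs_coord_le_norm _ i).trans (le_of_eq (norm_eq_of_mem_sphere γ))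
    have hKofReal : K = ENNReal.ofReal Kreal := by
      rw [hKldef, hKdef]
      rw [ofReal_integral_eq_lintegral_ofReal hKint
        (Filter.Eventually.of_forall fun γ => Real.rpow_nonneg (vnorm_nonneg _ _) _)]
      refine lintegral_congr fun γ => ?_
      rw [ENNReal.ofReal_rpow_of_nonneg (vnorm_nonneg _ _) hr0.le]
    set G₂ : (EuclideanSpace ℝ (Fin 3)) ×
        (Metric.sphere (0 : EuclideanSpace ℝ (Fin 3)) 1) → ℝ≥0∞ := fun z =>
      ENNReal.ofReal (vnorm q (z.2 : EuclideanSpace ℝ (Fin 3))) *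
        ENNReal.ofReal (g (z.1 - a • (z.2 : EuclideanSpace ℝ (Fin 3)))) with hG2def
    have hG2 : Measurable G₂ :=
      (ENNReal.measurable_ofReal.comp (hvq_meas.comp measurable_snd)).mul
        (ENNReal.measurable_ofReal.comp (hgm.comp hsub.measurable))
    have hptw : ∀ x, (‖F₂ x‖₊ : ℝ≥0∞) ≤
        ENNReal.ofReal (c * |t|) * ∫⁻ γ, G₂ (x, γ) ∂sphMeas := by
      intro x
      calc (‖F₂ x‖₊ : ℝ≥0∞)
          ≤ ∫⁻ γ, (‖c * t * ⟪(γ : EuclideanSpace ℝ (Fin 3)),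
              gradient u₀ (x - a • (γ : EuclideanSpace ℝ (Fin 3)))⟫‖₊ : ℝ≥0∞) ∂sphMeas :=
            enorm_integral_le_lintegral_enorm _
        _ ≤ ∫⁻ γ, ENNReal.ofReal (c * |t|) * G₂ (x, γ) ∂sphMeas := by
            refine lintegral_mono fun γ => ?_
            rw [← enorm_eq_nnnorm, ← ofReal_norm, Real.norm_eq_abs]
            have hbeta : G₂ (x, γ) = ENNReal.ofReal (vnorm q (γ : EuclideanSpace ℝ (Fin 3))) *
                ENNReal.ofReal (g (x - a • (γ : EuclideanSpace ℝ (Fin 3)))) := rfl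
            rw [hbeta]
            rw [← ENNReal.ofReal_mul (vnorm_nonneg _ _),
              ← ENNReal.ofReal_mul (mul_nonneg hc.le (abs_nonneg t))]
            refine ENNReal.ofReal_le_ofReal ?_
            calc |c * t * ⟪(γ : EuclideanSpace ℝ (Fin 3)),
                  gradient u₀ (x - a • (γ : EuclideanSpace ℝ (Fin 3)))⟫|
                = c * |t| * |⟪(γ : EuclideanSpace ℝ (Fin 3)),
                    gradient u₀ (x - a • (γ : EuclideanSpace ℝ (Fin 3)))⟫| := by
                  rw [abs_mul, abs_mul, abs_of_pos hc]
              _ ≤ c * |t| * (vnorm q (γ : EuclideanSpace ℝ (Fin 3)) *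
                    vnorm p (gradient u₀ (x - a • (γ : EuclideanSpace ℝ (Fin 3))))) :=
                  mul_le_mul_of_nonneg_left (abs_inner_le_vnorm hp1 hp2 hpq _ _)
                    (mul_nonneg hc.le (abs_nonneg t))
              _ = c * |t| * (vnorm q (γ : EuclideanSpace ℝ (Fin 3)) *
                    g (x - a • (γ : EuclideanSpace ℝ (Fin 3)))) := by
                  simp only [hgdef]
        _ = ENNReal.ofReal (c * |t|) * ∫⁻ γ, G₂ (x, γ) ∂sphMeas := by
            rw [lintegral_const_mul' _ _ ENNReal.ofReal_ne_top]
    have hkey : ∫⁻ x, (‖F₂ x‖₊ : ℝ≥0∞) ^ r ∂volume ≤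
        ENNReal.ofReal (c * |t|) ^ r * (sphMeas Set.univ ^ (r - 1) * (K * J)) := by
      calc ∫⁻ x, (‖F₂ x‖₊ : ℝ≥0∞) ^ r ∂volume
          ≤ ∫⁻ x, (ENNReal.ofReal (c * |t|) * ∫⁻ γ, G₂ (x, γ) ∂sphMeas) ^ r ∂volume :=
            lintegral_mono fun x => ENNReal.rpow_le_rpow (hptw x) hr0.le
        _ = ENNReal.ofReal (c * |t|) ^ r * ∫⁻ x, (∫⁻ γ, G₂ (x, γ) ∂sphMeas) ^ r ∂volume := by
            rw [← lintegral_const_mul']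
            · refine lintegral_congr fun x => ?_
              rw [ENNReal.mul_rpow_of_nonneg _ _ hr0.le]
            · exact ENNReal.rpow_ne_top_of_nonneg hr0.le ENNReal.ofReal_ne_top
        _ ≤ ENNReal.ofReal (c * |t|) ^ r *
              (sphMeas Set.univ ^ (r - 1) * ∫⁻ γ, (∫⁻ x, G₂ (x, γ) ^ r ∂volume) ∂sphMeas) :=
            mul_le_mul_right (lintegral_lintegral_pow_le sphMeas hG2 hr1) _
        _ = ENNReal.ofReal (c * |t|) ^ r * (sphMeas Set.univ ^ (r - 1) * (K * J)) := by
            congr 2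
            rw [hKldef, ← lintegral_mul_const _ (hvq_meas.ennreal_ofReal.pow_const r)]
            refine lintegral_congr fun γ => ?_
            calc ∫⁻ x, G₂ (x, γ) ^ r ∂volume
                = ∫⁻ x, ENNReal.ofReal (vnorm q (γ : EuclideanSpace ℝ (Fin 3))) ^ r *
                    ENNReal.ofReal (g (x - a • (γ : EuclideanSpace ℝ (Fin 3)))) ^ r ∂volume := by
                  refine lintegral_congr fun x => ?_
                  have hbeta : G₂ (x, γ) =
                      ENNReal.ofReal (vnorm q (γ : EuclideanSpace ℝ (Fin 3))) *
                      ENNReal.ofReal (g (x - a • (γ : EuclideanSpace ℝ (Fin 3)))) := rfl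
                  rw [hbeta, ENNReal.mul_rpow_of_nonneg _ _ hr0.le]
              _ = ENNReal.ofReal (vnorm q (γ : EuclideanSpace ℝ (Fin 3))) ^ r *
                    ∫⁻ x, ENNReal.ofReal (g (x - a • (γ : EuclideanSpace ℝ (Fin 3)))) ^ r
                      ∂volume :=
                  lintegral_const_mul' _ _
                    (ENNReal.rpow_ne_top_of_nonneg hr0.le ENNReal.ofReal_ne_top)
              _ = ENNReal.ofReal (vnorm q (γ : EuclideanSpace ℝ (Fin 3))) ^ r * J := by
                  congr 1
                  rw [hJdef]
                  exact (measurePreserving_sub_right volume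
                    (a • (γ : EuclideanSpace ℝ (Fin 3)))).lintegral_comp
                    ((ENNReal.measurable_ofReal.comp hgm).pow_const r)
    have h2 : eLpNorm F₂ p volume ≤
        ENNReal.ofReal (c * |t|) *
          ((sphMeas Set.univ ^ (r - 1)) ^ (1 / r) * (K ^ (1 / r) * J ^ (1 / r))) := by
      rw [hsr F₂]
      calc (∫⁻ x, (‖F₂ x‖₊ : ℝ≥0∞) ^ r ∂volume) ^ (1 / r)
          ≤ (ENNReal.ofReal (c * |t|) ^ r * (sphMeas Set.univ ^ (r - 1) * (K * J))) ^ (1 / r) :=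
            ENNReal.rpow_le_rpow hkey (by positivity)
        _ = ENNReal.ofReal (c * |t|) *
              ((sphMeas Set.univ ^ (r - 1)) ^ (1 / r) * (K ^ (1 / r) * J ^ (1 / r))) := by
            rw [ENNReal.mul_rpow_of_nonneg _ _ (by positivity : (0:ℝ) ≤ 1 / r),
              ENNReal.mul_rpow_of_nonneg _ _ (by positivity : (0:ℝ) ≤ 1 / r),
              ENNReal.mul_rpow_of_nonneg _ _ (by positivity : (0:ℝ) ≤ 1 / r),
              ← ENNReal.rpow_mul (ENNReal.ofReal (c * |t|)),
              mul_one_div_cancel hr0.ne', ENNReal.rpow_one]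
    -- constants computation
    have hconst : ENNReal.ofReal (1 / (4 * π)) *
        (ENNReal.ofReal (c * |t|) * ((sphMeas Set.univ ^ (r - 1)) ^ (1 / r) *
          (K ^ (1 / r)))) =
        ENNReal.ofReal ((((1 / (4 * π)) * Kreal) ^ (1 / r)) * c * |t|) := by
      rw [hνU, hKofReal]
      rw [ENNReal.ofReal_rpow_of_nonneg (by positivity : (0:ℝ) ≤ 4 * π) (by linarith : (0:ℝ) ≤ r - 1)]
      rw [ENNReal.ofReal_rpow_of_nonneg (by positivity : (0:ℝ) ≤ (4 * π) ^ (r - 1)) (by positivity : (0:ℝ) ≤ 1 / r)]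
      rw [ENNReal.ofReal_rpow_of_nonneg hK0 (by positivity : (0:ℝ) ≤ 1 / r)]
      rw [← ENNReal.ofReal_mul (by positivity), ← ENNReal.ofReal_mul (by positivity),
        ← ENNReal.ofReal_mul (by positivity)]
      congr 1
      have he1 : ((4 * π) ^ (r - 1)) ^ (1 / r) = (4 * π) ^ ((r - 1) * (1 / r)) :=
        (Real.rpow_mul (by positivity) _ _).symm
      have he2 : ((1 / (4 * π)) * Kreal) ^ (1 / r) =
          (1 / (4 * π)) ^ (1 / r) * Kreal ^ (1 / r) :=
        Real.mul_rpow (by positivity) hK0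
      have he3 : (1 / (4 * π)) * (4 * π) ^ ((r - 1) * (1 / r)) = (1 / (4 * π)) ^ (1 / r) := by
        rw [one_div, ← Real.rpow_neg_one (4 * π), ← Real.rpow_add h4π, ← Real.rpow_mul h4π.le]
        congr 1
        field_simp
        ring
      rw [he1, he2, ← he3]
      ring
    calc ENNReal.ofReal (1 / (4 * π)) * eLpNorm F₂ p volume
        ≤ ENNReal.ofReal (1 / (4 * π)) *
            (ENNReal.ofReal (c * |t|) *
              ((sphMeas Set.univ ^ (r - 1)) ^ (1 / r) * (K ^ (1 / r) * J ^ (1 / r)))) :=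
          mul_le_mul_right h2 _
      _ = (ENNReal.ofReal (1 / (4 * π)) *
            (ENNReal.ofReal (c * |t|) * ((sphMeas Set.univ ^ (r - 1)) ^ (1 / r) *
              (K ^ (1 / r))))) * J ^ (1 / r) := by ring
      _ = ENNReal.ofReal ((((1 / (4 * π)) * Kreal) ^ (1 / r)) * c * |t|) *
            eLpNorm g p volume := by rw [hconst, hJel]
  -- assemble
  have hbound : eLpNorm (fun x => (1 / (4 * π)) *
      ∫ γ : Metric.sphere (0 : EuclideanSpace ℝ (Fin 3)) 1,
        (u₀ (x - a • (γ : EuclideanSpace ℝ (Fin 3))) -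
          c * t * ⟪(γ : EuclideanSpace ℝ (Fin 3)),
            gradient u₀ (x - a • (γ : EuclideanSpace ℝ (Fin 3)))⟫) ∂sphMeas) p volume ≤
      eLpNorm u₀ p volume +
        ENNReal.ofReal ((((1 / (4 * π)) * Kreal) ^ (1 / r)) * c * |t|) *
          eLpNorm g p volume := by
    rw [hFeq]
    have hsmul : (fun x => (1 / (4 * π)) * (F₁ x - F₂ x)) =
        (1 / (4 * π) : ℝ) • (F₁ - F₂) := rfl
    rw [hsmul, eLpNorm_const_smul]
    have hnn : ‖(1 / (4 * π) : ℝ)‖ₑ = ENNReal.ofReal (1 / (4 * π)) :=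
      Real.enorm_eq_ofReal (by positivity)
    rw [hnn]
    calc ENNReal.ofReal (1 / (4 * π)) * eLpNorm (F₁ - F₂) p volume
        ≤ ENNReal.ofReal (1 / (4 * π)) * (eLpNorm F₁ p volume + eLpNorm F₂ p volume) :=
          mul_le_mul_right (eLpNorm_sub_le hF1m hF2m hp1) _
      _ = ENNReal.ofReal (1 / (4 * π)) * eLpNorm F₁ p volume +
            ENNReal.ofReal (1 / (4 * π)) * eLpNorm F₂ p volume := mul_add _ _ _
      _ ≤ _ := add_le_add hbound1 hbound2
  have hFm : AEStronglyMeasurable (fun x => (1 / (4 * π)) *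
      ∫ γ : Metric.sphere (0 : EuclideanSpace ℝ (Fin 3)) 1,
        (u₀ (x - a • (γ : EuclideanSpace ℝ (Fin 3))) -
          c * t * ⟪(γ : EuclideanSpace ℝ (Fin 3)),
            gradient u₀ (x - a • (γ : EuclideanSpace ℝ (Fin 3)))⟫) ∂sphMeas) volume := by
    rw [hFeq]
    exact (hF1m.sub hF2m).const_mul _
  have hlt : eLpNorm u₀ p volume +
      ENNReal.ofReal ((((1 / (4 * π)) * Kreal) ^ (1 / r)) * c * |t|) *
        eLpNorm g p volume < ⊤ :=
    ENNReal.add_lt_top.mpr ⟨hu₀p.2,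
      ENNReal.mul_lt_top ENNReal.ofReal_lt_top hgrad.2⟩
  exact ⟨⟨hFm, lt_of_le_of_lt hbound hlt⟩, hbound⟩
end

section
/- Let c > 0, r > 0, r' > 0, let k⁰ : [0,∞) × [0,∞) → ℝ be continuous, and let K(a,b) = ∫₀^a ∫₀^b k⁰(s,s') ds' ds. Define, for t ≠ 0 and t' ≠ 0, G(t,t') = (sgn(t t') / (16 c² r r')) · Σ_{ε,ε' ∈ {−1,1}} ε ε' K( (r + ε c|t|)², (r' + ε' c|t'|)² ). Then for all t ≠ 0 and t' ≠ 0 the mixed partial derivative ∂_{t'} ∂_t G(t,t') exists and equals (1/(4 r r')) · Σ_{ε,ε' ∈ {−1,1}} (r + ε c|t|)(r' + ε' c|t'|) · k⁰( (r + ε c|t|)², (r' + ε' c|t'|)² ). -/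
open Real

noncomputable def kE (k₀ : ℝ → ℝ → ℝ) : ℝ → ℝ → ℝ := fun s s' => k₀ (max s 0) (max s' 0)

noncomputable def PP (k : ℝ → ℝ → ℝ) (a b : ℝ) : ℝ := ∫ u in (0:ℝ)..b, k a u

noncomputable def KK (k : ℝ → ℝ → ℝ) (a b : ℝ) : ℝ := ∫ s in (0:ℝ)..a, PP k s b

lemma kE_cont {k₀ : ℝ → ℝ → ℝ}
    (hk₀ : ContinuousOn (fun s : ℝ × ℝ => k₀ s.1 s.2) (Set.Ici 0 ×ˢ Set.Ici 0)) :
    Continuous (fun p : ℝ × ℝ => kE k₀ p.1 p.2) := by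
  have hm : Continuous (fun p : ℝ × ℝ => (max p.1 0, max p.2 0)) := by fun_prop
  exact hk₀.comp_continuous hm (fun p => ⟨Set.mem_Ici.mpr (le_max_right _ _), Set.mem_Ici.mpr (le_max_right _ _)⟩)

lemma PP_cont {k : ℝ → ℝ → ℝ} (hk : Continuous (fun p : ℝ × ℝ => k p.1 p.2)) (b : ℝ) :
    Continuous (fun a => PP k a b) :=
  intervalIntegral.continuous_parametric_intervalIntegral_of_continuous' hk 0 b

lemma KK_hasDerivAt {k : ℝ → ℝ → ℝ} (hk : Continuous (fun p : ℝ × ℝ => k p.1 p.2)) (a b : ℝ) :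
    HasDerivAt (fun x => KK k x b) (PP k a b) a :=
  (((PP_cont hk b).integral_hasStrictDerivAt 0 a)).hasDerivAt

lemma PP_hasDerivAt {k : ℝ → ℝ → ℝ} (hk : Continuous (fun p : ℝ × ℝ => k p.1 p.2)) (a b : ℝ) :
    HasDerivAt (fun y => PP k a y) (k a b) b := by
  have h : Continuous (fun u : ℝ => k a u) := hk.comp (continuous_const.prodMk continuous_id)
  exact (h.integral_hasStrictDerivAt 0 b).hasDerivAt

/-- differentiating the radially symmetric wave kernel formula in `t` and `t'`:
the mixed partial derivative of
`G(t,t') = (sgn(tt')/(16c²rr')) Σ_{ε,ε'} εε' K((r+εc|t|)², (r'+ε'c|t'|)²)`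
exists away from `t = 0` and `t' = 0` and is given by the convolution-free formula. -/
theorem stmt_12 (c : ℝ) (hc : 0 < c) (r r' : ℝ) (hr : 0 < r) (hr' : 0 < r')
    (k₀ : ℝ → ℝ → ℝ)
    (hk₀ : ContinuousOn (fun s : ℝ × ℝ => k₀ s.1 s.2) (Set.Ici 0 ×ˢ Set.Ici 0))
    (K : ℝ → ℝ → ℝ) (hK : ∀ a b, K a b = ∫ s in (0:ℝ)..a, ∫ s' in (0:ℝ)..b, k₀ s s')
    (G : ℝ → ℝ → ℝ)
    (hG : ∀ t t', G t t' = (Real.sign (t * t') / (16 * c ^ 2 * r * r')) *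
      ∑ ε ∈ ({-1, 1} : Finset ℝ), ∑ ε' ∈ ({-1, 1} : Finset ℝ),
        ε * ε' * K ((r + ε * c * |t|) ^ 2) ((r' + ε' * c * |t'|) ^ 2)) :
    ∀ t t' : ℝ, t ≠ 0 → t' ≠ 0 →
      DifferentiableAt ℝ (fun s => G s t') t ∧
      HasDerivAt (fun s' => deriv (fun s => G s s') t)
        ((1 / (4 * r * r')) *
          ∑ ε ∈ ({-1, 1} : Finset ℝ), ∑ ε' ∈ ({-1, 1} : Finset ℝ),
            (r + ε * c * |t|) * (r' + ε' * c * |t'|) *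
              k₀ ((r + ε * c * |t|) ^ 2) ((r' + ε' * c * |t'|) ^ 2)) t' := by
  intro t t' ht ht'
  have hk : Continuous (fun p : ℝ × ℝ => kE k₀ p.1 p.2) := kE_cont hk₀
  -- K agrees with KK (kE k₀) on nonnegative arguments
  have hKKeq : ∀ a b : ℝ, 0 ≤ a → 0 ≤ b → K a b = KK (kE k₀) a b := by
    intro a b ha hb
    rw [hK]
    apply intervalIntegral.integral_congr
    intro s hs
    rw [Set.uIcc_of_le ha] at hs
    show (∫ s' in (0:ℝ)..b, k₀ s s') = PP (kE k₀) s b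
    apply intervalIntegral.integral_congr
    intro u hu
    rw [Set.uIcc_of_le hb] at hu
    simp [kE, max_eq_left hs.1, max_eq_left hu.1]
  -- sign data
  obtain ⟨σ, hσ1, hσt⟩ : ∃ σ : ℝ, (σ = 1 ∨ σ = -1) ∧ σ * t = |t| := by
    rcases lt_or_gt_of_ne ht with h | h
    · exact ⟨-1, Or.inr rfl, by rw [abs_of_neg h]; ring⟩
    · exact ⟨1, Or.inl rfl, by rw [abs_of_pos h]; ring⟩
  obtain ⟨σ', hσ'1, hσt'⟩ : ∃ σ' : ℝ, (σ' = 1 ∨ σ' = -1) ∧ σ' * t' = |t'| := by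
    rcases lt_or_gt_of_ne ht' with h | h
    · exact ⟨-1, Or.inr rfl, by rw [abs_of_neg h]; ring⟩
    · exact ⟨1, Or.inl rfl, by rw [abs_of_pos h]; ring⟩
  have habs : ∀ s : ℝ, 0 < σ * s → |s| = σ * s := by
    intro s hs
    rcases hσ1 with rfl | rfl
    · rw [abs_of_pos (by linarith)]; ring
    · rw [abs_of_neg (by linarith)]; ring
  have habs' : ∀ s : ℝ, 0 < σ' * s → |s| = σ' * s := by
    intro s hs
    rcases hσ'1 with rfl | rfl
    · rw [abs_of_pos (by linarith)]; ring
    · rw [abs_of_neg (by linarith)]; ring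
  have hsign : ∀ s s' : ℝ, 0 < σ * s → 0 < σ' * s' → Real.sign (s * s') = σ * σ' := by
    intro s s' hs hs'
    rcases hσ1 with rfl | rfl <;> rcases hσ'1 with rfl | rfl <;>
      first
        | (rw [Real.sign_of_pos (by nlinarith)]; norm_num)
        | (rw [Real.sign_of_neg (by nlinarith)]; norm_num)
  have h0t : 0 < σ * t := hσt ▸ abs_pos.mpr ht
  have h0t' : 0 < σ' * t' := hσt' ▸ abs_pos.mpr ht'
  have hUt : ∀ᶠ s in nhds t, 0 < σ * s := by
    have hcont : Continuous (fun s : ℝ => σ * s) := by fun_prop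
    have : IsOpen {s : ℝ | 0 < σ * s} := isOpen_lt continuous_const hcont
    exact Filter.eventually_of_mem (this.mem_nhds h0t) (fun s hs => hs)
  have hUt' : ∀ᶠ s' in nhds t', 0 < σ' * s' := by
    have hcont : Continuous (fun s : ℝ => σ' * s) := by fun_prop
    have : IsOpen {s : ℝ | 0 < σ' * s} := isOpen_lt continuous_const hcont
    exact Filter.eventually_of_mem (this.mem_nhds h0t') (fun s hs => hs)
  -- local smooth representation
  have hGH : ∀ s s' : ℝ, 0 < σ * s → 0 < σ' * s' →
      G s s' = (σ * σ' / (16 * c ^ 2 * r * r')) *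
        ∑ ε ∈ ({-1, 1} : Finset ℝ), ∑ ε' ∈ ({-1, 1} : Finset ℝ),
          ε * ε' * KK (kE k₀) ((r + ε * c * (σ * s)) ^ 2) ((r' + ε' * c * (σ' * s')) ^ 2) := by
    intro s s' hs hs'
    rw [hG, hsign s s' hs hs']
    congr 1
    apply Finset.sum_congr rfl
    intro ε _
    apply Finset.sum_congr rfl
    intro ε' _
    congr 1
    rw [habs s hs, habs' s' hs', hKKeq _ _ (sq_nonneg _) (sq_nonneg _)]
  -- derivative in the first variable
  have step1 : ∀ s' : ℝ, 0 < σ' * s' →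
      HasDerivAt (fun s => G s s')
        ((σ * σ' / (16 * c ^ 2 * r * r')) *
          ∑ ε ∈ ({-1, 1} : Finset ℝ), ∑ ε' ∈ ({-1, 1} : Finset ℝ),
            ε * ε' * (PP (kE k₀) ((r + ε * c * (σ * t)) ^ 2) ((r' + ε' * c * (σ' * s')) ^ 2) *
              (2 * (r + ε * c * (σ * t)) * (ε * c * σ)))) t := by
    intro s' hs'
    have hH : HasDerivAt (fun s => (σ * σ' / (16 * c ^ 2 * r * r')) *
        ∑ ε ∈ ({-1, 1} : Finset ℝ), ∑ ε' ∈ ({-1, 1} : Finset ℝ),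
          ε * ε' * KK (kE k₀) ((r + ε * c * (σ * s)) ^ 2) ((r' + ε' * c * (σ' * s')) ^ 2))
        ((σ * σ' / (16 * c ^ 2 * r * r')) *
          ∑ ε ∈ ({-1, 1} : Finset ℝ), ∑ ε' ∈ ({-1, 1} : Finset ℝ),
            ε * ε' * (PP (kE k₀) ((r + ε * c * (σ * t)) ^ 2) ((r' + ε' * c * (σ' * s')) ^ 2) *
              (2 * (r + ε * c * (σ * t)) * (ε * c * σ)))) t := by
      apply HasDerivAt.const_mul
      apply HasDerivAt.fun_sum
      intro ε _
      apply HasDerivAt.fun_sum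
      intro ε' _
      apply HasDerivAt.const_mul
      have hlin : HasDerivAt (fun s : ℝ => r + ε * c * (σ * s)) (ε * c * σ) t := by
        have h := (((hasDerivAt_id t).const_mul σ).const_mul (ε * c)).const_add r
        simpa using h
      have hin : HasDerivAt (fun s : ℝ => (r + ε * c * (σ * s)) ^ 2)
          (2 * (r + ε * c * (σ * t)) * (ε * c * σ)) t := by
        have := hlin.fun_pow 2
        exact this.congr_deriv (by push_cast; ring)
      exact HasDerivAt.comp t
        (KK_hasDerivAt hk ((r + ε * c * (σ * t)) ^ 2) ((r' + ε' * c * (σ' * s')) ^ 2)) hin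
    apply hH.congr_of_eventuallyEq
    filter_upwards [hUt] with s hs
    exact hGH s s' hs hs'
  -- the first-variable derivative as a function of the second variable
  have step1' : (fun s' => deriv (fun s => G s s') t) =ᶠ[nhds t']
      (fun s' => (σ * σ' / (16 * c ^ 2 * r * r')) *
        ∑ ε ∈ ({-1, 1} : Finset ℝ), ∑ ε' ∈ ({-1, 1} : Finset ℝ),
          ε * ε' * (PP (kE k₀) ((r + ε * c * (σ * t)) ^ 2) ((r' + ε' * c * (σ' * s')) ^ 2) *
            (2 * (r + ε * c * (σ * t)) * (ε * c * σ)))) := by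
    filter_upwards [hUt'] with s' hs'
    exact (step1 s' hs').deriv
  -- derivative of that in the second variable
  have step2 : HasDerivAt (fun s' => (σ * σ' / (16 * c ^ 2 * r * r')) *
      ∑ ε ∈ ({-1, 1} : Finset ℝ), ∑ ε' ∈ ({-1, 1} : Finset ℝ),
        ε * ε' * (PP (kE k₀) ((r + ε * c * (σ * t)) ^ 2) ((r' + ε' * c * (σ' * s')) ^ 2) *
          (2 * (r + ε * c * (σ * t)) * (ε * c * σ))))
      ((σ * σ' / (16 * c ^ 2 * r * r')) *
        ∑ ε ∈ ({-1, 1} : Finset ℝ), ∑ ε' ∈ ({-1, 1} : Finset ℝ),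
          ε * ε' * (kE k₀ ((r + ε * c * (σ * t)) ^ 2) ((r' + ε' * c * (σ' * t')) ^ 2) *
            (2 * (r' + ε' * c * (σ' * t')) * (ε' * c * σ')) *
            (2 * (r + ε * c * (σ * t)) * (ε * c * σ)))) t' := by
    apply HasDerivAt.const_mul
    apply HasDerivAt.fun_sum
    intro ε _
    apply HasDerivAt.fun_sum
    intro ε' _
    apply HasDerivAt.const_mul
    have hlin : HasDerivAt (fun s : ℝ => r' + ε' * c * (σ' * s)) (ε' * c * σ') t' := by
      have h := (((hasDerivAt_id t').const_mul σ').const_mul (ε' * c)).const_add r'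
      simpa using h
    have hin : HasDerivAt (fun s : ℝ => (r' + ε' * c * (σ' * s)) ^ 2)
        (2 * (r' + ε' * c * (σ' * t')) * (ε' * c * σ')) t' := by
      have := hlin.fun_pow 2
      exact this.congr_deriv (by push_cast; ring)
    have hcomp : HasDerivAt
        (fun s' => PP (kE k₀) ((r + ε * c * (σ * t)) ^ 2) ((r' + ε' * c * (σ' * s')) ^ 2))
        (kE k₀ ((r + ε * c * (σ * t)) ^ 2) ((r' + ε' * c * (σ' * t')) ^ 2) *
          (2 * (r' + ε' * c * (σ' * t')) * (ε' * c * σ'))) t' := by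
      exact HasDerivAt.comp t'
        (PP_hasDerivAt hk ((r + ε * c * (σ * t)) ^ 2) ((r' + ε' * c * (σ' * t')) ^ 2)) hin
    exact hcomp.mul_const _
  constructor
  · exact (step1 t' h0t').differentiableAt
  · have hval : (σ * σ' / (16 * c ^ 2 * r * r')) *
        ∑ ε ∈ ({-1, 1} : Finset ℝ), ∑ ε' ∈ ({-1, 1} : Finset ℝ),
          ε * ε' * (kE k₀ ((r + ε * c * (σ * t)) ^ 2) ((r' + ε' * c * (σ' * t')) ^ 2) *
            (2 * (r' + ε' * c * (σ' * t')) * (ε' * c * σ')) *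
            (2 * (r + ε * c * (σ * t)) * (ε * c * σ)))
        = (1 / (4 * r * r')) *
          ∑ ε ∈ ({-1, 1} : Finset ℝ), ∑ ε' ∈ ({-1, 1} : Finset ℝ),
            (r + ε * c * |t|) * (r' + ε' * c * |t'|) *
              k₀ ((r + ε * c * |t|) ^ 2) ((r' + ε' * c * |t'|) ^ 2) := by
      have hkE : ∀ x y : ℝ, kE k₀ (x ^ 2) (y ^ 2) = k₀ (x ^ 2) (y ^ 2) := by
        intro x y
        simp [kE, max_eq_left (sq_nonneg x), max_eq_left (sq_nonneg y)]
      simp only [hkE, Finset.sum_pair (show (-1 : ℝ) ≠ 1 by norm_num)]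
      rw [← hσt, ← hσt']
      rcases hσ1 with rfl | rfl <;> rcases hσ'1 with rfl | rfl <;>
        (field_simp; ring)
    rw [hval] at step2
    exact step2.congr_of_eventuallyEq step1'
end

section
/- Let c > 0, t, t' ∈ ℝ, x₀ ∈ ℝ³, and let k : ℝ³ × ℝ³ → ℝ be a continuous symmetric positive semidefinite kernel. For R > 0 define G_R : ℝ³ × ℝ³ → ℝ by G_R(x,x') = (t t' / (16π²)) ∫_{S²} ∫_{S²} k(x − c|t|γ, x' − c|t'|γ') · 1_{[0,R]}(|x − c|t|γ − x₀|) · 1_{[0,R]}(|x' − c|t'|γ' − x₀|) dσ_{S²}(γ) dσ_{S²}(γ'). Then for every continuous compactly supported function f : ℝ³ × ℝ³ → ℝ, (1/((4/3)πR³)²) ∫_{ℝ³} ∫_{ℝ³} f(x,x') G_R(x,x') dx dx' converges, as R → 0⁺, to k(x₀,x₀) · (t t' / (16π²)) ∫_{S²} ∫_{S²} f(x₀ + c|t|γ, x₀ + c|t'|γ') dσ_{S²}(γ) dσ_{S²}(γ'). -/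
open MeasureTheory Real Filter

/-- `k` is a symmetric positive semidefinite kernel. -/
def IsPSDKernel (k : EuclideanSpace ℝ (Fin 3) → EuclideanSpace ℝ (Fin 3) → ℝ) : Prop :=
  (∀ x y, k x y = k y x) ∧
  ∀ (q : ℕ) (x : Fin q → EuclideanSpace ℝ (Fin 3)) (a : Fin q → ℝ),
    0 ≤ ∑ i, ∑ j, a i * a j * k (x i) (x j)

/-- The double spherical mean `G_R` of the kernel `k` truncated to the ball `B(x₀,R)`. -/
noncomputable def GR (c t t' : ℝ) (x₀ : EuclideanSpace ℝ (Fin 3))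
    (k : EuclideanSpace ℝ (Fin 3) → EuclideanSpace ℝ (Fin 3) → ℝ) (R : ℝ)
    (x x' : EuclideanSpace ℝ (Fin 3)) : ℝ :=
  (t * t' / (16 * π ^ 2)) *
    ∫ γ : Metric.sphere (0 : EuclideanSpace ℝ (Fin 3)) 1,
      (∫ γ' : Metric.sphere (0 : EuclideanSpace ℝ (Fin 3)) 1,
        k (x - (c * |t|) • (γ : EuclideanSpace ℝ (Fin 3)))
          (x' - (c * |t'|) • (γ' : EuclideanSpace ℝ (Fin 3)))
        * Set.indicator (Set.Icc (0:ℝ) R) 1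
            ‖x - (c * |t|) • (γ : EuclideanSpace ℝ (Fin 3)) - x₀‖
        * Set.indicator (Set.Icc (0:ℝ) R) 1
            ‖x' - (c * |t'|) • (γ' : EuclideanSpace ℝ (Fin 3)) - x₀‖ ∂sphMeas) ∂sphMeas

namespace Stmt15Aux

abbrev E3 := EuclideanSpace ℝ (Fin 3)
abbrev S2 := Metric.sphere (0 : E3) 1

instance : IsFiniteMeasure sphMeas := by unfold sphMeas; infer_instance

instance : OpensMeasurableSpace ((E3 × E3) × S2 × S2) := Prod.opensMeasurableSpace

noncomputable instance : Measure.IsAddRightInvariant ((volume : Measure E3).prod (volume : Measure E3)) :=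
  Measure.prod.instIsAddRightInvariant

lemma volball (x₀ : E3) (R : ℝ) (hR : 0 ≤ R) :
    (volume (Metric.closedBall x₀ R)).toReal = (4/3) * π * R^3 := by
  rw [EuclideanSpace.volume_closedBall]
  have h1 : Real.Gamma ((Fintype.card (Fin 3) : ℝ) / 2 + 1) = 3/4 * Real.sqrt π := by
    rw [Fintype.card_fin]
    push_cast
    rw [Real.Gamma_add_one (by norm_num), show (3:ℝ)/2 = 1/2 + 1 by norm_num,
      Real.Gamma_add_one (by norm_num), Real.Gamma_one_half_eq]
    ring
  rw [h1, Fintype.card_fin]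
  have h2 : Real.sqrt π ^ 3 / (3/4 * Real.sqrt π) = (4/3) * π := by
    have hs : Real.sqrt π > 0 := Real.sqrt_pos.mpr pi_pos
    rw [show Real.sqrt π ^ 3 = (Real.sqrt π ^ 2) * Real.sqrt π by ring,
      Real.sq_sqrt pi_pos.le]
    field_simp
  rw [h2, ENNReal.toReal_mul, ← ENNReal.ofReal_pow hR, ENNReal.toReal_ofReal (by positivity),
    ENNReal.toReal_ofReal (by positivity)]
  ring

lemma ind_eq (x₀ : E3) (R : ℝ) (z : E3) :
    Set.indicator (Set.Icc (0:ℝ) R) 1 ‖z - x₀‖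
      = (Metric.closedBall x₀ R).indicator (1 : E3 → ℝ) z := by
  by_cases h : z ∈ Metric.closedBall x₀ R
  · rw [Metric.mem_closedBall, dist_eq_norm] at h
    simp [Set.indicator_apply, Set.mem_Icc, h, norm_nonneg, Metric.mem_closedBall, dist_eq_norm]
  · rw [Metric.mem_closedBall, dist_eq_norm, not_le] at h
    simp [Set.indicator_apply, Set.mem_Icc, Metric.mem_closedBall, dist_eq_norm, not_le.mpr h,
      h.not_ge]

lemma norm_ind_le_one (s : Set E3) (w : E3) : ‖s.indicator (1 : E3 → ℝ) w‖ ≤ 1 := by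
  by_cases h : w ∈ s <;> simp [h]

variable (a b : ℝ) (x₀ : E3) (k : E3 → E3 → ℝ) (f : E3 × E3 → ℝ)

/-- The limiting integrand. -/
noncomputable def Gf : (E3 × E3) × (S2 × S2) → ℝ :=
  fun z => f (z.1.1 + a • (z.2.1 : E3), z.1.2 + b • (z.2.2 : E3)) * k z.1.1 z.1.2

/-- Ball-integral of `Gf`. -/
noncomputable def Phi (R : ℝ) (q : S2 × S2) : ℝ :=
  ∫ p in (Metric.closedBall x₀ R) ×ˢ (Metric.closedBall x₀ R), Gf a b k f (p, q)
    ∂((volume : Measure E3).prod volume)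

/-- The full integrand of the tested quantity. -/
noncomputable def Fk (R : ℝ) (p : E3 × E3) (q : S2 × S2) : ℝ :=
  f p * (k (p.1 - a • (q.1 : E3)) (p.2 - b • (q.2 : E3))
    * (Metric.closedBall x₀ R).indicator 1 (p.1 - a • (q.1 : E3))
    * (Metric.closedBall x₀ R).indicator 1 (p.2 - b • (q.2 : E3)))

lemma map_cont : Continuous (fun z : (E3 × E3) × (S2 × S2) =>
    (z.1.1 - a • (z.2.1 : E3), z.1.2 - b • (z.2.2 : E3))) := by fun_prop

variable {k f}

lemma Fk_meas (hk : Continuous fun q : E3 × E3 => k q.1 q.2) (hf : Continuous f) (R : ℝ) :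
    Measurable (fun z : (E3 × E3) × (S2 × S2) => Fk a b x₀ k f R z.1 z.2) := by
  apply ((hf.comp continuous_fst).measurable).mul
  apply Measurable.mul
  apply Measurable.mul
  · exact (hk.comp (map_cont a b)).measurable
  · exact (measurable_const.indicator measurableSet_closedBall).comp
      (by fun_prop : Continuous fun z : (E3 × E3) × (S2 × S2) =>
        z.1.1 - a • (z.2.1 : E3)).measurable
  · exact (measurable_const.indicator measurableSet_closedBall).comp
      (by fun_prop : Continuous fun z : (E3 × E3) × (S2 × S2) =>
        z.1.2 - b • (z.2.2 : E3)).measurable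

lemma Fk_bound (hk : Continuous fun q : E3 × E3 => k q.1 q.2) (hf : Continuous f)
    (hfs : HasCompactSupport f) :
    ∃ Cb : ℝ, 0 ≤ Cb ∧ ∀ (R : ℝ) (p : E3 × E3) (q : S2 × S2),
      ‖Fk a b x₀ k f R p q‖ ≤ (tsupport f).indicator (fun _ => Cb) p := by
  obtain ⟨z₀, hz₀⟩ := hf.norm.exists_forall_ge_of_hasCompactSupport hfs.norm
  have hKf : IsCompact (tsupport f) := hfs
  obtain ⟨Ck₀, hCk⟩ := ((hKf.prod isCompact_univ).image (map_cont a b)).exists_bound_of_continuousOn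
    hk.continuousOn
  refine ⟨‖f z₀‖ * max Ck₀ 0, by positivity, fun R p q => ?_⟩
  by_cases hp : p ∈ tsupport f
  · rw [Set.indicator_of_mem hp]
    have hkv : ‖k (p.1 - a • (q.1 : E3)) (p.2 - b • (q.2 : E3))‖ ≤ max Ck₀ 0 := by
      have := hCk (p.1 - a • (q.1 : E3), p.2 - b • (q.2 : E3))
        ⟨(p, q), ⟨hp, Set.mem_univ _⟩, rfl⟩
      exact le_trans this (le_max_left _ _)
    have hX : ‖k (p.1 - a • (q.1 : E3)) (p.2 - b • (q.2 : E3))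
        * (Metric.closedBall x₀ R).indicator 1 (p.1 - a • (q.1 : E3))
        * (Metric.closedBall x₀ R).indicator 1 (p.2 - b • (q.2 : E3))‖ ≤ max Ck₀ 0 := by
      rw [norm_mul, norm_mul]
      calc ‖k _ _‖ * ‖_‖ * ‖_‖ ≤ max Ck₀ 0 * 1 * 1 := by
            apply mul_le_mul _ (norm_ind_le_one _ _) (norm_nonneg _)
              (by positivity)
            exact mul_le_mul hkv (norm_ind_le_one _ _) (norm_nonneg _) (le_max_right _ _)
        _ = max Ck₀ 0 := by ring
    calc ‖Fk a b x₀ k f R p q‖ = ‖f p‖ * ‖_‖ := norm_mul _ _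
      _ ≤ ‖f z₀‖ * max Ck₀ 0 := mul_le_mul (hz₀ p) hX (norm_nonneg _) (norm_nonneg _)
  · rw [Set.indicator_of_notMem hp]
    have hfp : f p = 0 := image_eq_zero_of_notMem_tsupport hp
    simp [Fk, hfp]

lemma Fk_int (hk : Continuous fun q : E3 × E3 => k q.1 q.2) (hf : Continuous f)
    (hfs : HasCompactSupport f) (R : ℝ) :
    Integrable (fun z : (E3 × E3) × (S2 × S2) => Fk a b x₀ k f R z.1 z.2)
      (((volume : Measure E3).prod volume).prod (sphMeas.prod sphMeas)) := by
  obtain ⟨Cb, hCb0, hCb⟩ := Fk_bound a b x₀ hk hf hfs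
  have hKf : IsCompact (tsupport f) := hfs
  have h1 : Integrable (fun p : E3 × E3 => (tsupport f).indicator (fun _ => Cb) p)
      ((volume : Measure E3).prod volume) := by
    rw [integrable_indicator_iff (isClosed_tsupport f).measurableSet]
    exact integrableOn_const hKf.measure_lt_top.ne
  have h2 : Integrable (fun _ : S2 × S2 => (1:ℝ)) (sphMeas.prod sphMeas) := integrable_const 1
  refine (h1.mul_prod h2).mono' ((Fk_meas a b x₀ hk hf R).aestronglyMeasurable) ?_
  exact Filter.Eventually.of_forall fun z => by simpa using hCb R z.1 z.2

lemma Fk_int_q (hk : Continuous fun q : E3 × E3 => k q.1 q.2) (hf : Continuous f)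
    (hfs : HasCompactSupport f) (R : ℝ) (p : E3 × E3) :
    Integrable (fun q : S2 × S2 => Fk a b x₀ k f R p q) (sphMeas.prod sphMeas) := by
  by_cases hp : p ∈ tsupport f
  · obtain ⟨Cb, hCb0, hCb⟩ := Fk_bound a b x₀ hk hf hfs
    refine (integrable_const Cb).mono'
      (((Fk_meas a b x₀ hk hf R).comp measurable_prodMk_left).aestronglyMeasurable)
      (Filter.Eventually.of_forall fun q => ?_)
    simpa [Set.indicator_of_mem hp] using hCb R p q
  · have hz : ∀ q : S2 × S2, Fk a b x₀ k f R p q = 0 := fun q => by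
      simp [Fk, image_eq_zero_of_notMem_tsupport hp]
    simp only [hz]
    exact integrable_const 0

lemma Fk_int_p (hk : Continuous fun q : E3 × E3 => k q.1 q.2) (hf : Continuous f)
    (hfs : HasCompactSupport f) (R : ℝ) (q : S2 × S2) :
    Integrable (fun p : E3 × E3 => Fk a b x₀ k f R p q)
      ((volume : Measure E3).prod volume) := by
  obtain ⟨Cb, hCb0, hCb⟩ := Fk_bound a b x₀ hk hf hfs
  have hKf : IsCompact (tsupport f) := hfs
  have h1 : Integrable (fun p : E3 × E3 => (tsupport f).indicator (fun _ => Cb) p)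
      ((volume : Measure E3).prod volume) := by
    rw [integrable_indicator_iff (isClosed_tsupport f).measurableSet]
    exact integrableOn_const hKf.measure_lt_top.ne
  refine h1.mono'
    (((Fk_meas a b x₀ hk hf R).comp (measurable_id.prodMk measurable_const)).aestronglyMeasurable)
    (Filter.Eventually.of_forall fun p => hCb R p q)

lemma Fk_slice (R : ℝ) (q : S2 × S2) :
    ∫ p, Fk a b x₀ k f R p q ∂((volume : Measure E3).prod volume)
      = Phi a b x₀ k f R q := by
  have hinv : ∫ p, Fk a b x₀ k f R p q ∂((volume : Measure E3).prod volume)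
      = ∫ p, Fk a b x₀ k f R (p + ((a • (q.1 : E3), b • (q.2 : E3)) : E3 × E3)) q
          ∂((volume : Measure E3).prod volume) :=
    (MeasureTheory.integral_add_right_eq_self
      (fun p : E3 × E3 => Fk a b x₀ k f R p q) _).symm
  rw [hinv]
  have hpt : ∀ p : E3 × E3,
      Fk a b x₀ k f R (p + ((a • (q.1 : E3), b • (q.2 : E3)) : E3 × E3)) q
        = ((Metric.closedBall x₀ R) ×ˢ (Metric.closedBall x₀ R)).indicator
            (fun r => Gf a b k f (r, q)) p := by
    intro p
    have hpv : p + ((a • (q.1 : E3), b • (q.2 : E3)) : E3 × E3)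
        = ((p.1 + a • (q.1 : E3), p.2 + b • (q.2 : E3)) : E3 × E3) := rfl
    simp only [hpv, Fk, Gf, add_sub_cancel_right]
    by_cases h1 : p.1 ∈ Metric.closedBall x₀ R <;>
      by_cases h2 : p.2 ∈ Metric.closedBall x₀ R <;>
      simp [Set.indicator_apply, Set.mem_prod, h1, h2]
  simp only [hpt]
  rw [MeasureTheory.integral_indicator (measurableSet_closedBall.prod measurableSet_closedBall)]
  rfl

lemma key_eq (hk : Continuous fun q : E3 × E3 => k q.1 q.2) (hf : Continuous f)
    (hfs : HasCompactSupport f) (R : ℝ) :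
    ∫ x, ∫ x', f (x, x') *
      (∫ γ : S2, ∫ γ' : S2, k (x - a • (γ : E3)) (x' - b • (γ' : E3))
        * Set.indicator (Set.Icc (0:ℝ) R) 1 ‖x - a • (γ : E3) - x₀‖
        * Set.indicator (Set.Icc (0:ℝ) R) 1 ‖x' - b • (γ' : E3) - x₀‖ ∂sphMeas ∂sphMeas)
    = ∫ q, Phi a b x₀ k f R q ∂(sphMeas.prod sphMeas) := by
  have h0 : ∀ x x' : E3, f (x, x') *
      (∫ γ : S2, ∫ γ' : S2, k (x - a • (γ : E3)) (x' - b • (γ' : E3))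
        * Set.indicator (Set.Icc (0:ℝ) R) 1 ‖x - a • (γ : E3) - x₀‖
        * Set.indicator (Set.Icc (0:ℝ) R) 1 ‖x' - b • (γ' : E3) - x₀‖ ∂sphMeas ∂sphMeas)
      = ∫ q : S2 × S2, Fk a b x₀ k f R (x, x') q ∂(sphMeas.prod sphMeas) := by
    intro x x'
    have step1 : f (x, x') *
        (∫ γ : S2, ∫ γ' : S2, k (x - a • (γ : E3)) (x' - b • (γ' : E3))
          * Set.indicator (Set.Icc (0:ℝ) R) 1 ‖x - a • (γ : E3) - x₀‖
          * Set.indicator (Set.Icc (0:ℝ) R) 1 ‖x' - b • (γ' : E3) - x₀‖ ∂sphMeas ∂sphMeas)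
        = ∫ γ : S2, ∫ γ' : S2, Fk a b x₀ k f R (x, x') (γ, γ') ∂sphMeas ∂sphMeas := by
      simp only [ind_eq, Fk]
      simp only [MeasureTheory.integral_const_mul]
    rw [step1]
    exact MeasureTheory.integral_integral (Fk_int_q a b x₀ hk hf hfs R (x, x'))
  calc ∫ x, ∫ x', f (x, x') *
      (∫ γ : S2, ∫ γ' : S2, k (x - a • (γ : E3)) (x' - b • (γ' : E3))
        * Set.indicator (Set.Icc (0:ℝ) R) 1 ‖x - a • (γ : E3) - x₀‖
        * Set.indicator (Set.Icc (0:ℝ) R) 1 ‖x' - b • (γ' : E3) - x₀‖ ∂sphMeas ∂sphMeas)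
      = ∫ x, ∫ x', ∫ q : S2 × S2, Fk a b x₀ k f R (x, x') q ∂(sphMeas.prod sphMeas) := by
        refine MeasureTheory.integral_congr_ae (Filter.Eventually.of_forall fun x => ?_)
        refine MeasureTheory.integral_congr_ae (Filter.Eventually.of_forall fun x' => ?_)
        exact h0 x x'
    _ = ∫ p : E3 × E3, ∫ q : S2 × S2, Fk a b x₀ k f R p q ∂(sphMeas.prod sphMeas)
          ∂((volume : Measure E3).prod volume) :=
        MeasureTheory.integral_integral ((Fk_int a b x₀ hk hf hfs R).integral_prod_left)
    _ = ∫ q : S2 × S2, ∫ p : E3 × E3, Fk a b x₀ k f R p q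
          ∂((volume : Measure E3).prod volume) ∂(sphMeas.prod sphMeas) :=
        MeasureTheory.integral_integral_swap (Fk_int a b x₀ hk hf hfs R)
    _ = ∫ q, Phi a b x₀ k f R q ∂(sphMeas.prod sphMeas) :=
        MeasureTheory.integral_congr_ae
          (Filter.Eventually.of_forall fun q => Fk_slice a b x₀ R q)

lemma Gf_cont (hk : Continuous fun q : E3 × E3 => k q.1 q.2) (hf : Continuous f) :
    Continuous (Gf a b k f) := by
  apply Continuous.mul
  · exact hf.comp (by fun_prop)
  · exact hk.comp continuous_fst

lemma tends_aux (hk : Continuous fun q : E3 × E3 => k q.1 q.2) (hf : Continuous f)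
    (hfs : HasCompactSupport f) :
    Tendsto (fun R : ℝ => (1 / ((4/3) * π * R^3)^2) *
        ∫ q, Phi a b x₀ k f R q ∂(sphMeas.prod sphMeas))
      (nhdsWithin 0 (Set.Ioi 0))
      (nhds (∫ q, Gf a b k f ((x₀, x₀), q) ∂(sphMeas.prod sphMeas))) := by
  have hG : Continuous (Gf a b k f) := Gf_cont a b hk hf
  have hG0int : Integrable (fun q : S2 × S2 => Gf a b k f ((x₀, x₀), q))
      (sphMeas.prod sphMeas) :=
    (hG.comp (Continuous.prodMk_right _)).integrable_of_hasCompactSupport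
      (HasCompactSupport.of_compactSpace _)
  rw [Metric.tendsto_nhdsWithin_nhds]
  intro ε hε
  set M := ((sphMeas.prod sphMeas) Set.univ).toReal with hM
  have hM0 : 0 ≤ M := ENNReal.toReal_nonneg
  set ε₁ := ε / (2 * (M + 1)) with hε₁def
  have hε₁ : 0 < ε₁ := by positivity
  have hKcpt : IsCompact ((Metric.closedBall x₀ 1 ×ˢ Metric.closedBall x₀ 1)
      ×ˢ (Set.univ : Set (S2 × S2))) :=
    ((isCompact_closedBall _ _).prod (isCompact_closedBall _ _)).prod isCompact_univ
  have hUC := hKcpt.uniformContinuousOn_of_continuous hG.continuousOn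
  rw [Metric.uniformContinuousOn_iff] at hUC
  obtain ⟨δ, hδ0, hδ⟩ := hUC ε₁ hε₁
  refine ⟨min δ 1, by positivity, fun R hR hdist => ?_⟩
  rw [Set.mem_Ioi] at hR
  rw [Real.dist_eq, sub_zero, abs_of_pos hR] at hdist
  have hRδ : R < δ := lt_of_lt_of_le hdist (min_le_left _ _)
  have hR1 : R ≤ 1 := le_of_lt (lt_of_lt_of_le hdist (min_le_right _ _))
  set N := (4/3) * π * R^3 with hNdef
  have hN0 : 0 < N := by rw [hNdef]; positivity
  set B := Metric.closedBall x₀ R with hBdef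
  have hvol : ((volume : Measure E3) B).toReal = N := volball x₀ R hR.le
  have hfin : (((volume : Measure E3).prod volume)) (B ×ˢ B) < ⊤ :=
    (((isCompact_closedBall _ _).prod (isCompact_closedBall _ _)).measure_lt_top)
  have hvol2 : ((((volume : Measure E3).prod volume)) (B ×ˢ B)).toReal = N^2 := by
    rw [Measure.prod_prod, ENNReal.toReal_mul, hvol]; ring
  -- pointwise bound on sphere pairs
  have hptb : ∀ q : S2 × S2,
      ‖(1 / N^2) * Phi a b x₀ k f R q - Gf a b k f ((x₀, x₀), q)‖ ≤ ε₁ := by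
    intro q
    have hcontp : Continuous (fun p : E3 × E3 => Gf a b k f (p, q)) :=
      hG.comp (continuous_id.prodMk continuous_const)
    have hint : IntegrableOn (fun p : E3 × E3 => Gf a b k f (p, q)) (B ×ˢ B)
        ((volume : Measure E3).prod volume) :=
      hcontp.continuousOn.integrableOn_compact
        ((isCompact_closedBall _ _).prod (isCompact_closedBall _ _))
    have hconst : ∫ _ in B ×ˢ B, Gf a b k f ((x₀, x₀), q)
          ∂((volume : Measure E3).prod volume)
        = N^2 * Gf a b k f ((x₀, x₀), q) := by
      rw [setIntegral_const, measureReal_def, hvol2, smul_eq_mul]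
    have hsub : Phi a b x₀ k f R q - N^2 * Gf a b k f ((x₀, x₀), q)
        = ∫ p in B ×ˢ B, (Gf a b k f (p, q) - Gf a b k f ((x₀, x₀), q))
            ∂((volume : Measure E3).prod volume) := by
      rw [MeasureTheory.integral_sub hint (integrableOn_const hfin.ne), hconst]
      rfl
    have hptw : ∀ p ∈ B ×ˢ B, ‖Gf a b k f (p, q) - Gf a b k f ((x₀, x₀), q)‖ ≤ ε₁ := by
      intro p hp
      have hpmem : ((p, q) : (E3 × E3) × (S2 × S2)) ∈
          (Metric.closedBall x₀ 1 ×ˢ Metric.closedBall x₀ 1) ×ˢ (Set.univ : Set (S2 × S2)) :=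
        ⟨⟨Metric.closedBall_subset_closedBall hR1 hp.1,
          Metric.closedBall_subset_closedBall hR1 hp.2⟩, trivial⟩
      have hx0mem : ((((x₀, x₀) : E3 × E3), q) : (E3 × E3) × (S2 × S2)) ∈
          (Metric.closedBall x₀ 1 ×ˢ Metric.closedBall x₀ 1) ×ˢ (Set.univ : Set (S2 × S2)) :=
        ⟨⟨Metric.mem_closedBall_self zero_le_one, Metric.mem_closedBall_self zero_le_one⟩,
          trivial⟩
      have hd : dist ((p, q) : (E3 × E3) × (S2 × S2)) (((x₀, x₀), q)) < δ := by
        rw [Prod.dist_eq, dist_self, max_eq_left dist_nonneg]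
        have h1 : dist p ((x₀, x₀) : E3 × E3) ≤ R := by
          rw [Prod.dist_eq]
          exact max_le hp.1 hp.2
        exact lt_of_le_of_lt h1 hRδ
      have := hδ _ hpmem _ hx0mem hd
      rw [Real.dist_eq] at this
      exact le_of_lt (by simpa [Real.norm_eq_abs] using this)
    have hnorm : ‖Phi a b x₀ k f R q - N^2 * Gf a b k f ((x₀, x₀), q)‖ ≤ ε₁ * N^2 := by
      rw [hsub]
      have hmeas : AEStronglyMeasurable
          (fun p : E3 × E3 => Gf a b k f (p, q) - Gf a b k f ((x₀, x₀), q))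
          ((((volume : Measure E3).prod volume)).restrict (B ×ˢ B)) :=
        (hcontp.sub continuous_const).aestronglyMeasurable.restrict
      calc ‖∫ p in B ×ˢ B, (Gf a b k f (p, q) - Gf a b k f ((x₀, x₀), q))
              ∂((volume : Measure E3).prod volume)‖
          ≤ ε₁ * ((((volume : Measure E3).prod volume)) (B ×ˢ B)).toReal :=
            norm_setIntegral_le_of_norm_le_const hfin hptw
        _ = ε₁ * N^2 := by rw [hvol2]
    have heq : (1 / N^2) * Phi a b x₀ k f R q - Gf a b k f ((x₀, x₀), q)
        = (1 / N^2) * (Phi a b x₀ k f R q - N^2 * Gf a b k f ((x₀, x₀), q)) := by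
      field_simp
    rw [heq, norm_mul, Real.norm_eq_abs (1 / N^2), abs_of_pos (by positivity)]
    calc (1 / N^2) * ‖Phi a b x₀ k f R q - N^2 * Gf a b k f ((x₀, x₀), q)‖
        ≤ (1 / N^2) * (ε₁ * N^2) := by
          exact mul_le_mul_of_nonneg_left hnorm (by positivity)
      _ = ε₁ := by field_simp
  -- continuity / integrability of the averaged function
  have hPhicont : Continuous (fun q : S2 × S2 => Phi a b x₀ k f R q) := by
    obtain ⟨CG, hCG⟩ := (((isCompact_closedBall x₀ R).prod (isCompact_closedBall x₀ R)).prod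
      (isCompact_univ : IsCompact (Set.univ : Set (S2 × S2)))).exists_bound_of_continuousOn
      hG.continuousOn
    apply MeasureTheory.continuous_of_dominated
      (F := fun (q : S2 × S2) (p : E3 × E3) => Gf a b k f (p, q)) (bound := fun _ => CG)
    · intro q
      exact (hG.comp (continuous_id.prodMk continuous_const)).aestronglyMeasurable
    · intro q
      filter_upwards [ae_restrict_mem (measurableSet_closedBall.prod measurableSet_closedBall)]
        with p hp
      exact hCG (p, q) ⟨hp, trivial⟩
    · exact integrableOn_const hfin.ne
    · exact Filter.Eventually.of_forall fun p => hG.comp (Continuous.prodMk_right p)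
  have hPhiint : Integrable (fun q : S2 × S2 => (1 / N^2) * Phi a b x₀ k f R q)
      (sphMeas.prod sphMeas) :=
    (continuous_const.mul hPhicont).integrable_of_hasCompactSupport
      (HasCompactSupport.of_compactSpace _)
  rw [Real.dist_eq]
  have hrw : (1 / N^2) * ∫ q, Phi a b x₀ k f R q ∂(sphMeas.prod sphMeas)
      = ∫ q, (1 / N^2) * Phi a b x₀ k f R q ∂(sphMeas.prod sphMeas) :=
    (MeasureTheory.integral_const_mul _ _).symm
  have hNeq : (1 / ((4/3) * π * R^3)^2) = 1 / N^2 := by rw [hNdef]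
  rw [hNeq, hrw, ← MeasureTheory.integral_sub hPhiint hG0int]
  have hbig : ‖∫ q, ((1 / N^2) * Phi a b x₀ k f R q - Gf a b k f ((x₀, x₀), q))
      ∂(sphMeas.prod sphMeas)‖ ≤ ε₁ * M :=
    norm_integral_le_of_norm_le_const (Filter.Eventually.of_forall fun q => hptb q)
  calc |∫ q, ((1 / N^2) * Phi a b x₀ k f R q - Gf a b k f ((x₀, x₀), q))
      ∂(sphMeas.prod sphMeas)| ≤ ε₁ * M := hbig
    _ ≤ ε₁ * (M + 1) := mul_le_mul_of_nonneg_left (by linarith) hε₁.le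
    _ = ε / 2 := by rw [hε₁def]; field_simp
    _ < ε := by linarith

end Stmt15Aux

open Stmt15Aux in
/-- point-source limit: after normalization by `((4/3)πR³)²`, the truncated
wave-kernel `G_R` converges weakly-* (tested against continuous compactly supported functions)
as `R → 0⁺` to `k(x₀,x₀)` times the tensor product of translated sphere measures. -/
theorem stmt_15 (c : ℝ) (hc : 0 < c) (t t' : ℝ) (x₀ : EuclideanSpace ℝ (Fin 3))
    (k : EuclideanSpace ℝ (Fin 3) → EuclideanSpace ℝ (Fin 3) → ℝ)
    (hk_cont : Continuous fun q : EuclideanSpace ℝ (Fin 3) × EuclideanSpace ℝ (Fin 3) =>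
      k q.1 q.2)
    (hk_psd : IsPSDKernel k)
    (f : EuclideanSpace ℝ (Fin 3) × EuclideanSpace ℝ (Fin 3) → ℝ)
    (hf_cont : Continuous f) (hf_supp : HasCompactSupport f) :
    Tendsto (fun R : ℝ =>
        (1 / ((4 / 3) * π * R ^ 3) ^ 2) * ∫ x, (∫ x', f (x, x') * GR c t t' x₀ k R x x') )
      (nhdsWithin 0 (Set.Ioi 0))
      (nhds (k x₀ x₀ * ((t * t' / (16 * π ^ 2)) *
        ∫ γ : Metric.sphere (0 : EuclideanSpace ℝ (Fin 3)) 1,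
          (∫ γ' : Metric.sphere (0 : EuclideanSpace ℝ (Fin 3)) 1,
            f (x₀ + (c * |t|) • (γ : EuclideanSpace ℝ (Fin 3)),
               x₀ + (c * |t'|) • (γ' : EuclideanSpace ℝ (Fin 3))) ∂sphMeas) ∂sphMeas))) := by
  have hG0int : Integrable
      (fun q : S2 × S2 => Gf (c * |t|) (c * |t'|) k f ((x₀, x₀), q)) (sphMeas.prod sphMeas) :=
    ((Gf_cont (c * |t|) (c * |t'|) hk_cont hf_cont).comp
      (Continuous.prodMk_right _)).integrable_of_hasCompactSupport
      (HasCompactSupport.of_compactSpace _)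
  have hfun : ∀ R : ℝ, ∫ x, (∫ x', f (x, x') * GR c t t' x₀ k R x x')
      = (t * t' / (16 * π ^ 2)) *
        ∫ q, Phi (c * |t|) (c * |t'|) x₀ k f R q ∂(sphMeas.prod sphMeas) := by
    intro R
    have h1 : ∀ x x' : E3, f (x, x') * GR c t t' x₀ k R x x'
        = (t * t' / (16 * π ^ 2)) * (f (x, x') *
          (∫ γ : S2, ∫ γ' : S2, k (x - (c * |t|) • (γ : E3)) (x' - (c * |t'|) • (γ' : E3))
            * Set.indicator (Set.Icc (0:ℝ) R) 1 ‖x - (c * |t|) • (γ : E3) - x₀‖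
            * Set.indicator (Set.Icc (0:ℝ) R) 1 ‖x' - (c * |t'|) • (γ' : E3) - x₀‖
            ∂sphMeas ∂sphMeas)) := by
      intro x x'
      simp only [GR]
      ring
    calc ∫ x, (∫ x', f (x, x') * GR c t t' x₀ k R x x')
        = ∫ x, ∫ x', (t * t' / (16 * π ^ 2)) * (f (x, x') *
          (∫ γ : S2, ∫ γ' : S2, k (x - (c * |t|) • (γ : E3)) (x' - (c * |t'|) • (γ' : E3))
            * Set.indicator (Set.Icc (0:ℝ) R) 1 ‖x - (c * |t|) • (γ : E3) - x₀‖
            * Set.indicator (Set.Icc (0:ℝ) R) 1 ‖x' - (c * |t'|) • (γ' : E3) - x₀‖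
            ∂sphMeas ∂sphMeas)) := by simp only [h1]
      _ = (t * t' / (16 * π ^ 2)) * ∫ x, ∫ x', (f (x, x') *
          (∫ γ : S2, ∫ γ' : S2, k (x - (c * |t|) • (γ : E3)) (x' - (c * |t'|) • (γ' : E3))
            * Set.indicator (Set.Icc (0:ℝ) R) 1 ‖x - (c * |t|) • (γ : E3) - x₀‖
            * Set.indicator (Set.Icc (0:ℝ) R) 1 ‖x' - (c * |t'|) • (γ' : E3) - x₀‖
            ∂sphMeas ∂sphMeas)) := by simp only [MeasureTheory.integral_const_mul]
      _ = (t * t' / (16 * π ^ 2)) *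
          ∫ q, Phi (c * |t|) (c * |t'|) x₀ k f R q ∂(sphMeas.prod sphMeas) := by
        rw [key_eq (c * |t|) (c * |t'|) x₀ hk_cont hf_cont hf_supp R]
  have hval : k x₀ x₀ * ((t * t' / (16 * π ^ 2)) *
        ∫ γ : S2, (∫ γ' : S2,
          f (x₀ + (c * |t|) • (γ : E3), x₀ + (c * |t'|) • (γ' : E3)) ∂sphMeas) ∂sphMeas)
      = (t * t' / (16 * π ^ 2)) *
        ∫ q, Gf (c * |t|) (c * |t'|) k f ((x₀, x₀), q) ∂(sphMeas.prod sphMeas) := by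
    have h2 : ∫ q, Gf (c * |t|) (c * |t'|) k f ((x₀, x₀), q) ∂(sphMeas.prod sphMeas)
        = ∫ γ : S2, ∫ γ' : S2, Gf (c * |t|) (c * |t'|) k f ((x₀, x₀), (γ, γ'))
            ∂sphMeas ∂sphMeas :=
      (MeasureTheory.integral_integral
        (f := fun γ γ' : S2 => Gf (c * |t|) (c * |t'|) k f ((x₀, x₀), (γ, γ'))) hG0int).symm
    rw [h2]
    simp only [Gf]
    simp only [MeasureTheory.integral_mul_const]
    ring
  rw [hval]
  have htends := (tends_aux (c * |t|) (c * |t'|) x₀ hk_cont hf_cont hf_supp).const_mul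
    (t * t' / (16 * π ^ 2))
  apply htends.congr
  intro R
  rw [hfun R]
  ring
end

section
/- Let n ≥ 1, W ∈ ℝⁿ, and let Φ : ℝ³ → ℝⁿ be continuous and vanishing outside some compact subset of ℝ³. For x₀ ∈ ℝ³ and λ > 0 define L(x₀,λ) = W^T (Φ(x₀)Φ(x₀)^T + λ Iₙ)^{-1} W + log det(Φ(x₀)Φ(x₀)^T + λ Iₙ), and define ℓ(x₀) = ‖W‖² − ⟨Φ(x₀),W⟩²/‖Φ(x₀)‖² when Φ(x₀) ≠ 0 and ℓ(x₀) = ‖W‖² when Φ(x₀) = 0. Then: (a) for each fixed x₀ ∈ ℝ³ there exist C > 0 and λ₀ ∈ (0,1) such that |λ L(x₀,λ) − ℓ(x₀)| ≤ C λ |log λ| for all λ ∈ (0,λ₀); (b) for each ε > 0 there exist C > 0 and λ₀ ∈ (0,1) such that for all λ ∈ (0,λ₀), sup over all x₀ with ‖Φ(x₀)‖² > ε of |λ L(x₀,λ) − ℓ(x₀)| ≤ C λ |log λ|. -/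
open Matrix Real

/-- The regularized log marginal likelihood `L(x₀,λ)` attached to the rank-one kernel built from
`Φ(x₀)` and observations `W`. -/
noncomputable def logLik {n : ℕ} (W : Fin n → ℝ)
    (Φ : EuclideanSpace ℝ (Fin 3) → Fin n → ℝ) (x₀ : EuclideanSpace ℝ (Fin 3)) (lam : ℝ) : ℝ :=
  W ⬝ᵥ ((vecMulVec (Φ x₀) (Φ x₀) + lam • (1 : Matrix (Fin n) (Fin n) ℝ))⁻¹ *ᵥ W) +
    Real.log (vecMulVec (Φ x₀) (Φ x₀) + lam • (1 : Matrix (Fin n) (Fin n) ℝ)).det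

/-- The limit object `ℓ(x₀) = ‖W‖²(1 − r(x₀)²)`. -/
noncomputable def limObj {n : ℕ} (W : Fin n → ℝ)
    (Φ : EuclideanSpace ℝ (Fin 3) → Fin n → ℝ) (x₀ : EuclideanSpace ℝ (Fin 3)) : ℝ :=
  if Φ x₀ = 0 then ∑ i, W i ^ 2
  else (∑ i, W i ^ 2) - (∑ i, Φ x₀ i * W i) ^ 2 / (∑ i, Φ x₀ i ^ 2)


variable {n : ℕ}

lemma vvT_mulVec (v x : Fin n → ℝ) :
    (vecMulVec v v) *ᵥ x = (v ⬝ᵥ x) • v := by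
  funext i
  simp only [mulVec, dotProduct, vecMulVec_apply, Pi.smul_apply, smul_eq_mul]
  rw [Finset.sum_mul]
  exact Finset.sum_congr rfl fun j _ => by ring

lemma smul_one_add_vvT (v : Fin n → ℝ) {lam : ℝ} (hl : lam ≠ 0) :
    vecMulVec v v + lam • (1 : Matrix (Fin n) (Fin n) ℝ)
      = lam • (1 + vecMulVec (lam⁻¹ • v) v) := by
  ext i j
  simp only [Matrix.add_apply, Matrix.smul_apply, vecMulVec_apply, Matrix.one_apply,
    Pi.smul_apply, smul_eq_mul]
  rcases eq_or_ne i j with rfl | h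
  · simp; field_simp; ring
  · simp [h]; field_simp

lemma det_calc (hn : 1 ≤ n) (v : Fin n → ℝ) {lam : ℝ} (hl : 0 < lam) :
    (vecMulVec v v + lam • (1 : Matrix (Fin n) (Fin n) ℝ)).det
      = lam ^ (n - 1) * (lam + ∑ i, v i ^ 2) := by
  rw [smul_one_add_vvT v hl.ne', det_smul]
  rw [vecMulVec_eq Unit, det_one_add_replicateCol_mul_replicateRow]
  have h1 : v ⬝ᵥ lam⁻¹ • v = lam⁻¹ * ∑ i, v i ^ 2 := by
    simp [dotProduct, Finset.mul_sum, sq]; exact Finset.sum_congr rfl fun j _ => by ring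
  rw [h1]
  have h2 : lam ^ n = lam ^ (n - 1) * lam := by
    rw [← pow_succ, Nat.sub_add_cancel hn]
  rw [Fintype.card_fin, h2]; field_simp

lemma dot_inv_calc (hn : 1 ≤ n) (W v : Fin n → ℝ) {lam : ℝ} (hl : 0 < lam) :
    W ⬝ᵥ ((vecMulVec v v + lam • (1 : Matrix (Fin n) (Fin n) ℝ))⁻¹ *ᵥ W)
      = lam⁻¹ * ((∑ i, W i ^ 2) - (∑ i, v i * W i) ^ 2 / (lam + ∑ i, v i ^ 2)) := by
  set s : ℝ := ∑ i, v i ^ 2 with hs_def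
  have hs0 : 0 ≤ s := Finset.sum_nonneg fun i _ => sq_nonneg _
  have hls : 0 < lam + s := by linarith
  set p : ℝ := ∑ i, v i * W i with hp_def
  set c : ℝ := p / (lam + s) with hc_def
  set A : Matrix (Fin n) (Fin n) ℝ := vecMulVec v v + lam • 1 with hA_def
  set u₀ : Fin n → ℝ := lam⁻¹ • (W - c • v) with hu_def
  have hvv : v ⬝ᵥ v = s := by simp [dotProduct, hs_def, sq]
  have hvW : v ⬝ᵥ W = p := rfl
  have hdotu : v ⬝ᵥ u₀ = c := by
    rw [hu_def, dotProduct_smul, dotProduct_sub, dotProduct_smul, hvv, hvW]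
    simp only [smul_eq_mul]
    rw [hc_def]; field_simp; ring
  have hmul : A *ᵥ u₀ = W := by
    rw [hA_def, add_mulVec, vvT_mulVec, smul_mulVec, one_mulVec, hdotu]
    rw [hu_def, smul_smul, mul_inv_cancel₀ hl.ne', one_smul]
    abel
  have hdet : A.det ≠ 0 := by
    rw [hA_def, det_calc hn v hl]
    positivity
  have hinv : A⁻¹ *ᵥ W = u₀ := by
    rw [← hmul, mulVec_mulVec, Matrix.nonsing_inv_mul A (isUnit_iff_ne_zero.mpr hdet),
      one_mulVec]
  rw [hinv, hu_def]
  rw [dotProduct_smul, dotProduct_sub, dotProduct_smul]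
  have hWW : W ⬝ᵥ W = ∑ i, W i ^ 2 := by simp [dotProduct, sq]
  have hWv : W ⬝ᵥ v = p := by
    simp only [dotProduct, hp_def]; exact Finset.sum_congr rfl fun i _ => by ring
  rw [hWW, hWv]
  simp only [smul_eq_mul, hc_def]
  field_simp

set_option maxHeartbeats 1000000 in
lemma est (n : ℕ) (q p s δ M lam : ℝ) (hq0 : 0 ≤ q) (hδ : 0 < δ)
    (hδs : δ ≤ s) (hsM : s ≤ M) (hp2 : p ^ 2 ≤ s * q) (hl0 : 0 < lam) (hl2 : lam < 1 / 2) :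
    |lam * (lam⁻¹ * (q - p ^ 2 / (lam + s)) + ((n - 1 : ℕ) * Real.log lam
        + Real.log (lam + s))) - (q - p ^ 2 / s)|
      ≤ (n + 1 + (q / δ + |Real.log δ| + |Real.log (1 + M)|) / Real.log 2)
          * lam * |Real.log lam| := by
  have hsδ : 0 < s := lt_of_lt_of_le hδ hδs
  have hls : 0 < lam + s := by linarith
  have hδls : δ ≤ lam + s := by linarith
  have hlog2 : 0 < Real.log 2 := Real.log_pos (by norm_num)
  have hloglam : Real.log 2 ≤ |Real.log lam| := by
    rw [abs_of_neg (Real.log_neg hl0 (by linarith)), ← Real.log_inv]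
    apply Real.log_le_log (by norm_num)
    rw [le_inv_comm₀ (by norm_num) hl0]
    linarith
  have habs0 : 0 < |Real.log lam| := lt_of_lt_of_le hlog2 hloglam
  set K : ℝ := q / δ + |Real.log δ| + |Real.log (1 + M)| with hK_def
  have hK0 : 0 ≤ K := by positivity
  set T : ℝ := (n - 1 : ℕ) * Real.log lam + Real.log (lam + s) with hT_def
  have heq : lam * (lam⁻¹ * (q - p ^ 2 / (lam + s)) + T) - (q - p ^ 2 / s)
      = p ^ 2 * lam / (s * (lam + s)) + lam * T := by
    field_simp
    ring
  rw [heq]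
  have hb1 : p ^ 2 * lam / (s * (lam + s)) ≤ lam * (q / δ) := by
    have h0 : lam * (q / δ) = lam * q / δ := (mul_div_assoc _ _ _).symm
    rw [h0, div_le_div_iff₀ (by positivity) hδ]
    have h1 : p ^ 2 * δ ≤ s * q * (lam + s) := by nlinarith
    nlinarith [mul_le_mul_of_nonneg_left h1 hl0.le]
  have hlogub : Real.log (lam + s) ≤ Real.log (1 + M) := by
    apply Real.log_le_log hls
    have : δ ≤ M := le_trans hδs hsM
    linarith
  have hloglb : Real.log δ ≤ Real.log (lam + s) := Real.log_le_log hδ hδls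
  have hlogls : |Real.log (lam + s)| ≤ |Real.log δ| + |Real.log (1 + M)| := by
    rw [abs_le]
    constructor
    · have h1 := neg_abs_le (Real.log δ)
      have h2 := abs_nonneg (Real.log (1 + M))
      linarith
    · have h1 := le_abs_self (Real.log (1 + M))
      have h2 := abs_nonneg (Real.log δ)
      linarith
  have hTabs : |T| ≤ (n - 1 : ℕ) * |Real.log lam| + (|Real.log δ| + |Real.log (1 + M)|) := by
    calc |T| ≤ |((n - 1 : ℕ) : ℝ) * Real.log lam| + |Real.log (lam + s)| := abs_add_le _ _
      _ ≤ (n - 1 : ℕ) * |Real.log lam| + (|Real.log δ| + |Real.log (1 + M)|) := by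
          rw [abs_mul, Nat.abs_cast]
          exact add_le_add le_rfl hlogls
  have hstep : |p ^ 2 * lam / (s * (lam + s)) + lam * T|
      ≤ lam * (q / δ) + lam * ((n - 1 : ℕ) * |Real.log lam|
          + (|Real.log δ| + |Real.log (1 + M)|)) := by
    calc |p ^ 2 * lam / (s * (lam + s)) + lam * T|
        ≤ |p ^ 2 * lam / (s * (lam + s))| + |lam * T| := abs_add_le _ _
      _ = p ^ 2 * lam / (s * (lam + s)) + lam * |T| := by
          rw [abs_of_nonneg (by positivity), abs_mul, abs_of_pos hl0]
      _ ≤ _ := add_le_add hb1 (mul_le_mul_of_nonneg_left hTabs hl0.le)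
  refine le_trans hstep ?_
  have hn1 : ((n - 1 : ℕ) : ℝ) ≤ (n : ℝ) := by exact_mod_cast Nat.sub_le n 1
  have hKs : lam * K ≤ K / Real.log 2 * (lam * |Real.log lam|) := by
    rw [div_mul_eq_mul_div, le_div_iff₀ hlog2]
    nlinarith [mul_le_mul_of_nonneg_left hloglam (mul_nonneg hl0.le hK0)]
  have hns : lam * (((n - 1 : ℕ) : ℝ) * |Real.log lam|)
      ≤ ((n : ℝ) + 1) * (lam * |Real.log lam|) := by
    have h2 : (0:ℝ) ≤ lam * |Real.log lam| := by positivity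
    have h3 : ((n - 1 : ℕ) : ℝ) ≤ (n : ℝ) + 1 := by linarith
    calc lam * (((n - 1 : ℕ) : ℝ) * |Real.log lam|)
        = ((n - 1 : ℕ) : ℝ) * (lam * |Real.log lam|) := by ring
      _ ≤ ((n : ℝ) + 1) * (lam * |Real.log lam|) := mul_le_mul_of_nonneg_right h3 h2
  calc lam * (q / δ) + lam * ((n - 1 : ℕ) * |Real.log lam|
          + (|Real.log δ| + |Real.log (1 + M)|))
      = lam * K + lam * (((n - 1 : ℕ) : ℝ) * |Real.log lam|) := by rw [hK_def]; ring
    _ ≤ K / Real.log 2 * (lam * |Real.log lam|) + ((n : ℝ) + 1) * (lam * |Real.log lam|) :=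
        add_le_add hKs hns
    _ = (n + 1 + K / Real.log 2) * lam * |Real.log lam| := by ring

lemma est0 (n : ℕ) (hn : 1 ≤ n) (q δ M lam : ℝ) (hq0 : 0 ≤ q) (hδ : 0 < δ)
    (hl0 : 0 < lam) (hl2 : lam < 1 / 2) :
    |lam * (lam⁻¹ * (q - 0 ^ 2 / (lam + 0)) + ((n - 1 : ℕ) * Real.log lam
        + Real.log (lam + 0))) - q|
      ≤ (n + 1 + (q / δ + |Real.log δ| + |Real.log (1 + M)|) / Real.log 2)
          * lam * |Real.log lam| := by
  have heq : lam * (lam⁻¹ * (q - 0 ^ 2 / (lam + 0)) + ((n - 1 : ℕ) * Real.log lam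
      + Real.log (lam + 0))) - q = (n : ℝ) * (lam * Real.log lam) := by
    have hcast : ((n - 1 : ℕ) : ℝ) = (n : ℝ) - 1 := by
      rw [Nat.cast_sub hn]; norm_num
    rw [hcast, show lam + 0 = lam from by ring]
    field_simp
    ring
  rw [heq, abs_mul, Nat.abs_cast, abs_mul, abs_of_pos hl0]
  have hKd : 0 ≤ (q / δ + |Real.log δ| + |Real.log (1 + M)|) / Real.log 2 := by
    have : 0 < Real.log 2 := Real.log_pos (by norm_num)
    positivity
  have h2 : (0:ℝ) ≤ lam * |Real.log lam| := by positivity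
  nlinarith

lemma bound_lemma (hn : 1 ≤ n) (W v : Fin n → ℝ) (δ M : ℝ) (hδ : 0 < δ)
    (hv : v = 0 ∨ (δ ≤ ∑ i, v i ^ 2 ∧ ∑ i, v i ^ 2 ≤ M)) {lam : ℝ}
    (hl : lam ∈ Set.Ioo (0:ℝ) (1/2)) :
    |lam * (W ⬝ᵥ ((vecMulVec v v + lam • (1 : Matrix (Fin n) (Fin n) ℝ))⁻¹ *ᵥ W) +
        Real.log (vecMulVec v v + lam • (1 : Matrix (Fin n) (Fin n) ℝ)).det)
      - (if v = 0 then ∑ i, W i ^ 2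
          else (∑ i, W i ^ 2) - (∑ i, v i * W i) ^ 2 / (∑ i, v i ^ 2))|
    ≤ (n + 1 + ((∑ i, W i ^ 2) / δ + |Real.log δ| + |Real.log (1 + M)|) / Real.log 2)
        * lam * |Real.log lam| := by
  obtain ⟨hl0, hl2⟩ := hl
  rw [dot_inv_calc hn W v hl0, det_calc hn v hl0]
  have hls' : (0:ℝ) < lam + ∑ i, v i ^ 2 := by
    have : (0:ℝ) ≤ ∑ i, v i ^ 2 := Finset.sum_nonneg fun i _ => sq_nonneg _
    linarith
  rw [show Real.log (lam ^ (n-1) * (lam + ∑ i, v i ^ 2))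
      = (n - 1 : ℕ) * Real.log lam + Real.log (lam + ∑ i, v i ^ 2) from by
    rw [Real.log_mul (pow_ne_zero _ hl0.ne') hls'.ne', Real.log_pow]]
  have hq0 : (0:ℝ) ≤ ∑ i, W i ^ 2 := Finset.sum_nonneg fun i _ => sq_nonneg _
  rcases hv with hv | ⟨hδs, hsM⟩
  · rw [if_pos hv]
    have hs : (∑ i, v i ^ 2) = (0:ℝ) := by simp [hv]
    have hp : (∑ i, v i * W i) = (0:ℝ) := by simp [hv]
    rw [hs, hp]
    exact est0 n hn _ δ M lam hq0 hδ hl0 hl2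
  · have hvne : v ≠ 0 := by
      intro h
      rw [h] at hδs
      simp only [Pi.zero_apply] at hδs
      simp at hδs
      linarith
    rw [if_neg hvne]
    exact est n _ _ _ δ M lam hq0 hδ hδs hsM
      (Finset.sum_mul_sq_le_sq_mul_sq Finset.univ v W) hl0 hl2


lemma Cpos (n : ℕ) (q δ M : ℝ) (hq0 : 0 ≤ q) (hδ : 0 < δ) :
    0 < (n : ℝ) + 1 + (q / δ + |Real.log δ| + |Real.log (1 + M)|) / Real.log 2 := by
  have hlog2 : 0 < Real.log 2 := Real.log_pos (by norm_num)
  have h1 : 0 ≤ (q / δ + |Real.log δ| + |Real.log (1 + M)|) / Real.log 2 := by positivity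
  have h2 : (0:ℝ) ≤ n := Nat.cast_nonneg n
  linarith


/-- asymptotics of the regularized log marginal likelihood as `λ → 0⁺`:
(a) pointwise `λ L(x₀,λ) = ℓ(x₀) + O(λ log λ)`; (b) uniformly over `{x₀ : ‖Φ(x₀)‖² > ε}`. -/
theorem stmt_16 (n : ℕ) (hn : 1 ≤ n) (W : Fin n → ℝ)
    (Φ : EuclideanSpace ℝ (Fin 3) → Fin n → ℝ)
    (hΦ_cont : Continuous Φ) (hΦ_supp : HasCompactSupport Φ) :
    (∀ x₀ : EuclideanSpace ℝ (Fin 3), ∃ C > (0:ℝ), ∃ lam₀ ∈ Set.Ioo (0:ℝ) 1,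
      ∀ lam ∈ Set.Ioo (0:ℝ) lam₀,
        |lam * logLik W Φ x₀ lam - limObj W Φ x₀| ≤ C * lam * |Real.log lam|) ∧
    (∀ ε > (0:ℝ), ∃ C > (0:ℝ), ∃ lam₀ ∈ Set.Ioo (0:ℝ) 1,
      ∀ lam ∈ Set.Ioo (0:ℝ) lam₀, ∀ x₀ : EuclideanSpace ℝ (Fin 3),
        ε < ∑ i, Φ x₀ i ^ 2 →
        |lam * logLik W Φ x₀ lam - limObj W Φ x₀| ≤ C * lam * |Real.log lam|) := by
  have hq0 : (0:ℝ) ≤ ∑ i, W i ^ 2 := Finset.sum_nonneg fun i _ => sq_nonneg _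
  constructor
  · intro x₀
    by_cases h0 : Φ x₀ = 0
    · refine ⟨(n : ℝ) + 1 + ((∑ i, W i ^ 2) / 1 + |Real.log 1| + |Real.log (1 + 1)|)
          / Real.log 2, Cpos n _ 1 1 hq0 one_pos, 1/2, ⟨by norm_num, by norm_num⟩,
          fun lam hlam => ?_⟩
      simpa [logLik, limObj] using
        bound_lemma hn W (Φ x₀) 1 1 one_pos (Or.inl h0) hlam
    · have hs0 : (0:ℝ) < ∑ i, Φ x₀ i ^ 2 := by
        rcases Function.ne_iff.mp h0 with ⟨i, hi⟩
        simp only [Pi.zero_apply] at hi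
        have : (0:ℝ) < Φ x₀ i ^ 2 := pow_two_pos_of_ne_zero hi
        exact Finset.sum_pos' (fun j _ => sq_nonneg _) ⟨i, Finset.mem_univ i, this⟩
      refine ⟨(n : ℝ) + 1 + ((∑ i, W i ^ 2) / (∑ i, Φ x₀ i ^ 2) + |Real.log (∑ i, Φ x₀ i ^ 2)|
          + |Real.log (1 + ∑ i, Φ x₀ i ^ 2)|) / Real.log 2,
          Cpos n _ _ _ hq0 hs0, 1/2, ⟨by norm_num, by norm_num⟩, fun lam hlam => ?_⟩
      simpa [logLik, limObj] using
        bound_lemma hn W (Φ x₀) (∑ i, Φ x₀ i ^ 2) (∑ i, Φ x₀ i ^ 2) hs0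
          (Or.inr ⟨le_rfl, le_rfl⟩) hlam
  · intro ε hε
    obtain ⟨B, hB⟩ := hΦ_supp.exists_bound_of_continuous hΦ_cont
    have hbound : ∀ x : EuclideanSpace ℝ (Fin 3), (∑ i, Φ x i ^ 2) ≤ (n : ℝ) * B ^ 2 := by
      intro x
      have h1 : ∀ i, Φ x i ^ 2 ≤ B ^ 2 := by
        intro i
        have h2 : |Φ x i| ≤ B := le_trans (norm_le_pi_norm (Φ x) i) (hB x)
        have h3 := abs_nonneg (Φ x i)
        nlinarith [abs_le.mp h2]
      calc (∑ i, Φ x i ^ 2) ≤ ∑ _i : Fin n, B ^ 2 :=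
            Finset.sum_le_sum fun i _ => h1 i
        _ = (n : ℝ) * B ^ 2 := by simp [mul_comm]
    refine ⟨(n : ℝ) + 1 + ((∑ i, W i ^ 2) / ε + |Real.log ε|
        + |Real.log (1 + (n : ℝ) * B ^ 2)|) / Real.log 2, Cpos n _ _ _ hq0 hε,
        1/2, ⟨by norm_num, by norm_num⟩, fun lam hlam x₀ hx => ?_⟩
    simpa [logLik, limObj] using
      bound_lemma hn W (Φ x₀) ε ((n : ℝ) * B ^ 2) hε
        (Or.inr ⟨le_of_lt hx, hbound x₀⟩) hlam
end
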